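/- arXiv:1804.11282 — 7 statements merged into one kernel-verified Lean document; each statement's English description precedes it below -/
import Mathlib

section
/- Let R ∈ (0, +∞] and let ψ : (0,R) → ℝ be an increasing function such that for some real constants A, B, C, D one has (A + B·ψ(r))² = (C·ψ(r) + D)/(2r²) for all r ∈ (0,R). If ψ(r) → +∞ as r → R (from below, or as r → ∞ when R = +∞), then B = 0; consequently, if in addition C ≠ 0, then ψ(r) = (2A²/C)·r² − D/C for all r ∈ (0,R), i.e. ψ is a harmonic potential up to an additive constant. -/
/-!
Evaluate the relation along `r → R`. For `r ≥ r₀ > 0` it gives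
`(A + Bψ)² = (Cψ + D)/(2r²) ≤ (Cψ + D)/(2r₀²)`, a quadratic in `ψ` bounded by an affine function
of `ψ`. Since `ψ → +∞`, this forces the quadratic coefficient `B²` to vanish. With `B = 0` the
relation is linear in `ψ` and can be solved for it when `C ≠ 0`.
-/

open Filter Set Topology

lemma tendsto_sq_sub_affine_atTop {A B : ℝ} (hB : B ≠ 0) (E F : ℝ) :
    Tendsto (fun t : ℝ => (A + B * t) ^ 2 - (E * t + F)) atTop atTop := by
  have hB2 : 0 < B ^ 2 := by positivity
  have h : Tendsto (fun t : ℝ => t * (B ^ 2 * t + (2 * A * B - E)) + (A ^ 2 - F)) atTop atTop :=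
    tendsto_atTop_add_const_right _ _ <| tendsto_id.atTop_mul_atTop₀ <|
      tendsto_atTop_add_const_right _ _ <| (tendsto_const_mul_atTop_of_pos hB2).mpr tendsto_id
  exact h.congr fun t => by ring

lemma le_div_of_eq_div_of_le {x v s s₀ : ℝ} (hx : 0 ≤ x) (h : x = v / s) (hs₀ : 0 < s₀)
    (hs : s₀ ≤ s) : x ≤ v / s₀ := by
  have hv : 0 ≤ v := by
    rw [eq_div_iff (hs₀.trans_le hs).ne'] at h
    rw [← h]
    exact mul_nonneg hx (hs₀.le.trans hs)
  exact h ▸ div_le_div_of_nonneg_left hv hs₀ hs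

theorem eq_zero_of_sq_eq_div_of_tendsto_atTop {ι : Type*} {l : Filter ι} [l.NeBot]
    {f g : ι → ℝ} {c A B C D : ℝ} (hc : 0 < c) (hf : Tendsto f l atTop)
    (hg : ∀ᶠ i in l, c ≤ g i) (heq : ∀ᶠ i in l, (A + B * f i) ^ 2 = (C * f i + D) / g i) :
    B = 0 := by
  by_contra hB
  have hlarge : ∀ᶠ i in l, 1 ≤ (A + B * f i) ^ 2 - (C / c * f i + D / c) :=
    ((tendsto_sq_sub_affine_atTop hB _ _).comp hf).eventually_ge_atTop 1
  have hbounded : ∀ᶠ i in l, (A + B * f i) ^ 2 - (C / c * f i + D / c) ≤ 0 := by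
    filter_upwards [hg, heq] with i hgi heqi
    have := le_div_of_eq_div_of_le (sq_nonneg _) heqi hc hgi
    rw [add_div, mul_div_right_comm] at this
    linarith
  obtain ⟨i, h1, h2⟩ := (hlarge.and hbounded).exists
  linarith

namespace EReal

lemma Ioo_coe_subset_range_coe (a : ℝ) (R : EReal) : Ioo (a : EReal) R ⊆ range ((↑) : ℝ → EReal) :=
  fun _ ⟨ha, hR⟩ => ⟨_, coe_toReal (hR.trans_le le_top).ne (ha.trans_le' bot_le).ne'⟩

variable {R : EReal} {a : ℝ}

lemma comap_coe_nhdsLT_neBot (ha : (a : EReal) < R) :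
    (comap ((↑) : ℝ → EReal) (𝓝[<] R)).NeBot :=
  (nhdsLT_neBot_of_exists_lt ⟨_, ha⟩).comap_of_range_mem <|
    mem_of_superset (Ioo_mem_nhdsLT ha) (Ioo_coe_subset_range_coe a R)

lemma eventually_gt_and_lt_comap_coe_nhdsLT (ha : (a : EReal) < R) :
    ∀ᶠ r : ℝ in comap (↑) (𝓝[<] R), a < r ∧ (r : EReal) < R := by
  filter_upwards [preimage_mem_comap (Ioo_mem_nhdsLT ha)] with r ⟨har, hrR⟩
  exact ⟨by exact_mod_cast har, hrR⟩

end EReal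

theorem stmt_1_general (R : EReal) (hR : 0 < R) (ψ : ℝ → ℝ) (A B C D : ℝ)
    (heq : ∀ r : ℝ, 0 < r → (r : EReal) < R →
      (A + B * ψ r) ^ 2 = (C * ψ r + D) / (2 * r ^ 2))
    (hlim : Filter.Tendsto ψ
      (Filter.comap (fun r : ℝ => (r : EReal)) (nhdsWithin R (Set.Iio R)))
      Filter.atTop) :
    B = 0 ∧ (C ≠ 0 → ∀ r : ℝ, 0 < r → (r : EReal) < R →
      ψ r = (2 * A ^ 2 / C) * r ^ 2 - D / C) := by
  obtain ⟨r₀, hr₀, hr₀R⟩ := EReal.exists_between_coe_real hR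
  rw [EReal.coe_pos] at hr₀
  have := EReal.comap_coe_nhdsLT_neBot hr₀R
  have hnear := EReal.eventually_gt_and_lt_comap_coe_nhdsLT hr₀R
  have hrel : ∀ᶠ r in comap (↑) (𝓝[<] R), (A + B * ψ r) ^ 2 = (C * ψ r + D) / (2 * r ^ 2) := by
    filter_upwards [hnear] with r hr
    exact heq r (hr₀.trans hr.1) hr.2
  have hr₀_le : ∀ᶠ r in comap (↑) (𝓝[<] R), 2 * r₀ ^ 2 ≤ 2 * r ^ 2 := by
    filter_upwards [hnear] with r hr
    gcongr
    exact hr.1.le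
  have hB : B = 0 := eq_zero_of_sq_eq_div_of_tendsto_atTop (by positivity) hlim hr₀_le hrel
  refine ⟨hB, fun hC r hr hrR => ?_⟩
  have h := heq r hr hrR
  rw [hB, zero_mul, add_zero] at h
  field_simp at h ⊢
  linarith

/-- Let `R ∈ (0,+∞]` and `ψ : (0,R) → ℝ` be increasing with
`(A + Bψ(r))² = (Cψ(r) + D)/(2r²)` on `(0,R)`. If `ψ(r) → +∞` as `r → R` from below
(i.e. as `r → ∞` when `R = +∞`), then `B = 0`; consequently, if moreover `C ≠ 0`,
then `ψ(r) = (2A²/C) r² − D/C` on `(0,R)`, i.e. `ψ` is harmonic up to a constant. -/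
theorem stmt_1 (R : EReal) (hR : 0 < R) (ψ : ℝ → ℝ) (A B C D : ℝ)
    (hmono : StrictMonoOn ψ {r : ℝ | 0 < r ∧ (r : EReal) < R})
    (heq : ∀ r : ℝ, 0 < r → (r : EReal) < R →
      (A + B * ψ r) ^ 2 = (C * ψ r + D) / (2 * r ^ 2))
    (hlim : Filter.Tendsto ψ
      (Filter.comap (fun r : ℝ => (r : EReal)) (nhdsWithin R (Set.Iio R)))
      Filter.atTop) :
    B = 0 ∧ (C ≠ 0 → ∀ r : ℝ, 0 < r → (r : EReal) < R →
      ψ r = (2 * A ^ 2 / C) * r ^ 2 - D / C) :=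
  stmt_1_general R hR ψ A B C D heq hlim
end

section
/- Let φ be a real-analytic function on a neighborhood of a point x₀ ∈ ℝ with φ'(x₀) = 0 and φ''(x₀) = 2. Suppose there exist ε > 0 and ϖ ≥ 0 such that for every λ ∈ (0,ε) and all points x_p < x_a in (x₀ − ε, x₀ + ε) with φ(x_p) = φ(x₀) + λ and φ(x_a) = φ(x₀) + λ, one has x_a − x_p = ϖ·√λ. Then 5·(φ'''(x₀))² = 6·φ⁗(x₀). -/
/-!
Write `φ = φ x₀ + u²` with `u` analytic, `u x₀ = 0` and `u' x₀ = 1` (an analytic square root of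
`φ - φ x₀`, which has a double zero at `x₀`). For `x` slightly to the right of `x₀`, the chord at
height `u(x)²` ends on the left at a point where `u` equals `-u(x)`, and the hypothesis puts this
point at `x - ϖ u(x)`. By the identity theorem `u (x - ϖ u x) = -u x` near `x₀`. Differentiating
once gives `ϖ = 2`, three times gives `u''' = 3 u''²`, and Leibniz's rule for `u²` gives
`φ''' = 6 u''` and `φ⁗ = 6 u''² + 8 u'''` at `x₀`.
-/

open Filter Topology Set
open scoped ContDiff

section DoubleZero

variable {𝕜 : Type*} [NontriviallyNormedField 𝕜] {f : 𝕜 → 𝕜} {a : 𝕜}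

theorem AnalyticAt.dslope_dslope_same [CompleteSpace 𝕜] [CharZero 𝕜] (hf : AnalyticAt 𝕜 f a) :
    dslope (dslope f a) a a = iteratedDeriv 2 f a / 2 := by
  simpa [dslope_same] using
    ((hf.hasFPowerSeriesAt.has_fpower_series_iterate_dslope_fslope 2).coeff_zero (fun _ => 1)).symm

theorem sub_eq_sq_mul_dslope_dslope (h1 : deriv f a = 0) (x : 𝕜) :
    f x - f a = (x - a) ^ 2 * dslope (dslope f a) a x := by
  rw [← sub_smul_dslope, smul_eq_mul, ← sub_zero (dslope f a x), ← h1, ← dslope_same,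
    ← sub_smul_dslope, smul_eq_mul]
  ring

end DoubleZero

theorem AnalyticAt.exists_eventuallyEq_add_sq {f : ℝ → ℝ} {a : ℝ} (hf : AnalyticAt ℝ f a)
    (h1 : deriv f a = 0) (h2 : iteratedDeriv 2 f a = 2) :
    ∃ u : ℝ → ℝ, AnalyticAt ℝ u a ∧ u a = 0 ∧ deriv u a = 1 ∧
      (∀ᶠ x in 𝓝[≠] a, 0 < (x - a) * u x) ∧ f =ᶠ[𝓝 a] fun x => f a + u x ^ 2 := by
  have hha : dslope (dslope f a) a a = 1 := by rw [hf.dslope_dslope_same, h2]; norm_num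
  set h := dslope (dslope f a) a
  have hh : AnalyticAt ℝ h a :=
    ⟨_, hf.hasFPowerSeriesAt.has_fpower_series_iterate_dslope_fslope 2⟩
  have hsqrt : AnalyticAt ℝ (fun x => √(h x)) a :=
    (Real.contDiffAt_sqrt (x := h a) (n := ω) (by rw [hha]; norm_num)).analyticAt.comp hh
  have hpos : ∀ᶠ x in 𝓝 a, 0 < h x :=
    hh.continuousAt.eventually (eventually_gt_nhds (by rw [hha]; norm_num))
  refine ⟨fun x => (x - a) * √(h x), (analyticAt_id.sub analyticAt_const).mul hsqrt, by simp,
    ?_, ?_, ?_⟩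
  · have := ((hasDerivAt_id' a).sub_const a).fun_mul hsqrt.differentiableAt.hasDerivAt
    simpa [hha] using this.deriv
  · filter_upwards [nhdsWithin_le_nhds hpos, self_mem_nhdsWithin] with x hx hxa
    have : x - a ≠ 0 := sub_ne_zero.mpr hxa
    rw [← mul_assoc, ← sq]
    positivity
  · filter_upwards [hpos] with x hx
    rw [mul_pow, Real.sq_sqrt hx.le, ← sub_eq_sq_mul_dslope_dslope h1]
    ring

theorem eventually_comp_sub_mul_eq_neg_of_chord {φ u : ℝ → ℝ} {x₀ ε ϖ : ℝ} (hε : 0 < ε)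
    (hcont : ∀ᶠ x in 𝓝 x₀, ContinuousAt φ x)
    (hsq : φ =ᶠ[𝓝 x₀] fun x => φ x₀ + u x ^ 2)
    (hsign : ∀ᶠ x in 𝓝[≠] x₀, 0 < (x - x₀) * u x)
    (hchord : ∀ lam : ℝ, 0 < lam → lam < ε →
        ∀ xp xa : ℝ, xp ∈ Ioo (x₀ - ε) (x₀ + ε) → xa ∈ Ioo (x₀ - ε) (x₀ + ε) →
          xp < xa → φ xp = φ x₀ + lam → φ xa = φ x₀ + lam →
          xa - xp = ϖ * √lam) :
    ∀ᶠ x in 𝓝[>] x₀, u (x - ϖ * u x) = -u x := by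
  have hG : ∀ᶠ y in 𝓝 x₀, ContinuousAt φ y ∧ φ y = φ x₀ + u y ^ 2 ∧
      (y ≠ x₀ → 0 < (y - x₀) * u y) ∧ y ∈ Ioo (x₀ - ε) (x₀ + ε) :=
    hcont.and <| hsq.and <| (eventually_nhdsWithin_iff.mp hsign).and <|
      Ioo_mem_nhds (by linarith) (by linarith)
  obtain ⟨b, hb : b < x₀, hbG⟩ :=
    mem_nhdsLE_iff_exists_Icc_subset.mp (mem_nhdsWithin_of_mem_nhds hG)
  have hb_sign : 0 < (b - x₀) * u b := (hbG (left_mem_Icc.mpr hb.le)).2.2.1 hb.ne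
  have hub : 0 < u b ^ 2 := by
    have : u b ≠ 0 := by rintro h; simp [h] at hb_sign
    positivity
  have hclose : ∀ᶠ x in 𝓝 x₀, φ x < φ x₀ + min ε (u b ^ 2) :=
    hG.self_of_nhds.1.eventually (eventually_lt_nhds (by linarith [lt_min hε hub]))
  filter_upwards [nhdsWithin_le_nhds (hclose.and hG), self_mem_nhdsWithin]
    with x ⟨hxφ, hxG⟩ (hx : x₀ < x)
  obtain ⟨-, hxsq, hxsign, hxε⟩ := hxG
  have hux : 0 < u x := pos_of_mul_pos_right (hxsign hx.ne') (sub_pos.mpr hx).le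
  have hlam : u x ^ 2 < min ε (u b ^ 2) := by linarith
  obtain ⟨c, hc, hφc⟩ : ∃ c ∈ Ioo b x₀, φ c = φ x₀ + u x ^ 2 := by
    refine intermediate_value_Ioo' hb.le (fun y hy => (hbG hy).1.continuousWithinAt) ⟨?_, ?_⟩
    · simpa using pow_pos hux 2
    · rw [(hbG (left_mem_Icc.mpr hb.le)).2.1]
      linarith [min_le_right ε (u b ^ 2)]
  obtain ⟨-, hcsq, hcsign, hcε⟩ := hbG (Ioo_subset_Icc_self hc)
  have huc : u c < 0 := neg_of_mul_pos_right (hcsign hc.2.ne) (sub_neg.mpr hc.2).le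
  have hlength := hchord (u x ^ 2) (by positivity) (hlam.trans_le (min_le_left _ _)) c x hcε hxε
    (hc.2.trans hx) hφc hxsq
  rw [Real.sqrt_sq hux.le] at hlength
  rw [show x - ϖ * u x = c by linarith]
  nlinarith

theorem AnalyticAt.eventuallyEq_of_eventuallyEq_nhdsGT {E : Type*} [NormedAddCommGroup E]
    [NormedSpace ℝ E] {f g : ℝ → E} {a : ℝ} (hf : AnalyticAt ℝ f a) (hg : AnalyticAt ℝ g a)
    (hfg : f =ᶠ[𝓝[>] a] g) : f =ᶠ[𝓝 a] g :=
  (hf.frequently_eq_iff_eventually_eq hg).mp <|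
    hfg.frequently.filter_mono (nhdsWithin_mono a fun _ hx => ne_of_gt hx)

section Derivatives

variable {u : ℝ → ℝ} {a c : ℝ}

theorem hasDerivAt_id_sub_const_mul {u' : ℝ} (hu : HasDerivAt u u' a) :
    HasDerivAt (fun x => x - c * u x) (1 - c * u') a :=
  (hasDerivAt_id' a).fun_sub (hu.const_mul c)

theorem iteratedDeriv_id_sub_const_mul {n : ℕ} (hn : 2 ≤ n) (hu : ContDiffAt ℝ n u a) :
    iteratedDeriv n (fun x => x - c * u x) a = -(c * iteratedDeriv n u a) := by
  rw [iteratedDeriv_fun_sub contDiffAt_fun_id (contDiffAt_const.mul hu), iteratedDeriv_fun_id,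
    iteratedDeriv_const_mul_field]
  simp [show n ≠ 0 by omega, show n ≠ 1 by omega]

theorem eq_two_of_comp_sub_mul_eq_neg (hu : HasDerivAt u 1 a) (h0 : u a = 0)
    (hrefl : (fun x => u (x - c * u x)) =ᶠ[𝓝 a] fun x => -u x) :
    c = 2 := by
  have hcomp : HasDerivAt (fun x => u (x - c * u x)) (1 - c) a := by
    have hu' : HasDerivAt u 1 (a - c * u a) := by simpa [h0] using hu
    have := hu'.comp a (hasDerivAt_id_sub_const_mul hu)
    rwa [one_mul, mul_one] at this
  have hfirst := (hcomp.congr_of_eventuallyEq hrefl.symm).unique hu.fun_neg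
  linarith

theorem iteratedDeriv_three_eq_of_comp_sub_two_mul_eq_neg (hu : ContDiffAt ℝ 3 u a)
    (h0 : u a = 0) (h1 : deriv u a = 1)
    (hrefl : (fun x => u (x - 2 * u x)) =ᶠ[𝓝 a] fun x => -u x) :
    iteratedDeriv 3 u a = 3 * iteratedDeriv 2 u a ^ 2 := by
  have hψa : a - 2 * u a = a := by simp [h0]
  have hψ1 : deriv (fun x => x - 2 * u x) a = -1 := by
    rw [(hasDerivAt_id_sub_const_mul (hu.differentiableAt (by norm_num)).hasDerivAt).deriv, h1]
    norm_num
  have hcomp := iteratedDeriv_comp_three (g := u) (hψa.symm ▸ hu)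
    (contDiffAt_fun_id.sub (contDiffAt_const.mul hu))
  have hthird := hrefl.iteratedDeriv_eq 3
  simp only [Function.comp_def] at hcomp
  rw [hcomp, hψa, hψ1, iteratedDeriv_id_sub_const_mul le_rfl (hu.of_le (by norm_num)),
    iteratedDeriv_id_sub_const_mul (by norm_num) hu, h1, iteratedDeriv_fun_neg] at hthird
  linarith

theorem iteratedDeriv_three_sq (hu : ContDiffAt ℝ 3 u a) (h0 : u a = 0) (h1 : deriv u a = 1) :
    iteratedDeriv 3 (fun x => u x ^ 2) a = 6 * iteratedDeriv 2 u a := by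
  simp only [sq]
  rw [iteratedDeriv_fun_mul hu hu]
  simp [Finset.sum_range_succ, h0, h1, Nat.choose]
  ring

theorem iteratedDeriv_four_sq (hu : ContDiffAt ℝ 4 u a) (h0 : u a = 0) (h1 : deriv u a = 1) :
    iteratedDeriv 4 (fun x => u x ^ 2) a =
      6 * iteratedDeriv 2 u a ^ 2 + 8 * iteratedDeriv 3 u a := by
  simp only [sq]
  rw [iteratedDeriv_fun_mul hu hu]
  simp [Finset.sum_range_succ, h0, h1, Nat.choose]
  ring

end Derivatives

/-- **Lemma B.2.** Let `φ` be real-analytic near `x₀` with `φ'(x₀) = 0` and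
`φ''(x₀) = 2`. If there are `ε > 0` and `ϖ ≥ 0` such that for every `λ ∈ (0,ε)` and all
points `x_p < x_a` of `(x₀ − ε, x₀ + ε)` with `φ(x_p) = φ(x_a) = φ(x₀) + λ` one has
`x_a − x_p = ϖ √λ`, then `5 (φ'''(x₀))² = 6 φ⁗(x₀)`. -/
theorem stmt_4 (φ : ℝ → ℝ) (x₀ : ℝ) (hφ : AnalyticAt ℝ φ x₀)
    (h1 : deriv φ x₀ = 0) (h2 : iteratedDeriv 2 φ x₀ = 2)
    (hchord : ∃ ε : ℝ, 0 < ε ∧ ∃ ϖ : ℝ, 0 ≤ ϖ ∧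
      ∀ lam : ℝ, 0 < lam → lam < ε →
        ∀ xp xa : ℝ, xp ∈ Set.Ioo (x₀ - ε) (x₀ + ε) → xa ∈ Set.Ioo (x₀ - ε) (x₀ + ε) →
          xp < xa → φ xp = φ x₀ + lam → φ xa = φ x₀ + lam →
          xa - xp = ϖ * Real.sqrt lam) :
    5 * (iteratedDeriv 3 φ x₀) ^ 2 = 6 * iteratedDeriv 4 φ x₀ := by
  obtain ⟨ε, hε, ϖ, -, hchord⟩ := hchord
  obtain ⟨u, hu, hu0, hu1, hsign, hsq⟩ := hφ.exists_eventuallyEq_add_sq h1 h2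
  have hψ : AnalyticAt ℝ (fun x => u (x - ϖ * u x)) x₀ :=
    hu.comp_of_eq (analyticAt_id.sub (analyticAt_const.mul hu)) (by simp [hu0])
  have hrefl : (fun x => u (x - ϖ * u x)) =ᶠ[𝓝 x₀] fun x => -u x :=
    hψ.eventuallyEq_of_eventuallyEq_nhdsGT hu.neg <|
      eventually_comp_sub_mul_eq_neg_of_chord hε
        (hφ.eventually_analyticAt.mono fun _ h => h.continuousAt) hsq hsign hchord
  obtain rfl := eq_two_of_comp_sub_mul_eq_neg (hu1 ▸ hu.differentiableAt.hasDerivAt) hu0 hrefl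
  have h3 := iteratedDeriv_three_eq_of_comp_sub_two_mul_eq_neg hu.contDiffAt hu0 hu1 hrefl
  rw [hsq.iteratedDeriv_eq, iteratedDeriv_const_add (by norm_num),
    iteratedDeriv_three_sq hu.contDiffAt hu0 hu1, hsq.iteratedDeriv_eq,
    iteratedDeriv_const_add (by norm_num), iteratedDeriv_four_sq hu.contDiffAt hu0 hu1, h3]
  ring
end

section
/- Let I ⊆ ℝ be an open interval and f : I → ℝ a real-analytic function satisfying 5·(f'''(x))² = 3·f⁗(x)·f''(x) for every x ∈ I. Then either f is a polynomial of degree at most 2 on I, or there exist real constants c ≠ 0, α ≠ 0, β, a, d with α·x + β > 0 for all x ∈ I and f(x) = c·√(α·x + β) + a·x + d for all x ∈ I. -/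
/-!
Where `g = f''` does not vanish, the equation says exactly that `|g|^(-2/3)` has zero
second derivative, so `g² L³ = 1` for some positive affine `L`. At a zero of `g` approached
from the right by non-zeros, the bounded `L³ = 1 / g²` would have to blow up; so zeros of `g`
are not isolated and, by the identity theorem, either `g ≡ 0` or `g` never vanishes. In the
second case connectedness fixes the sign, `g = ±L^(-3/2)`, and integrating twice gives a
quadratic (`L` constant) or `c √L` plus an affine function.
-/

open Real Set Filter Topology

section IteratedDeriv

variable {𝕜 F : Type*} [NontriviallyNormedField 𝕜] [NormedAddCommGroup F] [NormedSpace 𝕜 F]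
  [CompleteSpace F] {f : 𝕜 → F} {s : Set 𝕜}

theorem AnalyticOnNhd.iteratedDeriv (hf : AnalyticOnNhd 𝕜 f s) (n : ℕ) :
    AnalyticOnNhd 𝕜 (_root_.iteratedDeriv n f) s := by
  rw [iteratedDeriv_eq_iterate]
  exact hf.iterated_deriv n

theorem AnalyticOnNhd.hasDerivAt_iteratedDeriv (hf : AnalyticOnNhd 𝕜 f s) (n : ℕ) {x : 𝕜}
    (hx : x ∈ s) :
    HasDerivAt (_root_.iteratedDeriv n f) (_root_.iteratedDeriv (n + 1) f x) x := by
  rw [iteratedDeriv_succ]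
  exact (hf.iteratedDeriv n x hx).differentiableAt.hasDerivAt

end IteratedDeriv

lemma IsOpen.exists_eq_affine_of_hasDerivAt {s : Set ℝ} (hs : IsOpen s)
    (hs' : IsPreconnected s) {φ φ' : ℝ → ℝ} (hφ : ∀ x ∈ s, HasDerivAt φ (φ' x) x)
    (hφ' : ∀ x ∈ s, HasDerivAt φ' 0 x) :
    ∃ a b : ℝ, ∀ x ∈ s, φ x = a * x + b := by
  obtain ⟨a, ha⟩ := hs.exists_is_const_of_deriv_eq_zero hs'
    (fun x hx => (hφ' x hx).differentiableAt.differentiableWithinAt)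
    fun x hx => (hφ' x hx).deriv
  have hψ : ∀ x ∈ s, HasDerivAt (fun t => φ t - a * t) 0 x := fun x hx => by
    simpa [ha x hx] using (hφ x hx).fun_sub ((hasDerivAt_id x).const_mul a)
  obtain ⟨b, hb⟩ := hs.exists_is_const_of_deriv_eq_zero hs'
    (fun x hx => (hψ x hx).differentiableAt.differentiableWithinAt)
    fun x hx => (hψ x hx).deriv
  exact ⟨a, b, fun x hx => by linarith [hb x hx]⟩

lemma IsOpen.exists_eq_add_affine_of_hasDerivAt {s : Set ℝ} (hs : IsOpen s)
    (hs' : IsPreconnected s) {f f' q q' q'' : ℝ → ℝ} (hf : ∀ x ∈ s, HasDerivAt f (f' x) x)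
    (hf' : ∀ x ∈ s, HasDerivAt f' (q'' x) x) (hq : ∀ x ∈ s, HasDerivAt q (q' x) x)
    (hq' : ∀ x ∈ s, HasDerivAt q' (q'' x) x) :
    ∃ a b : ℝ, ∀ x ∈ s, f x = q x + a * x + b := by
  obtain ⟨a, b, hab⟩ := hs.exists_eq_affine_of_hasDerivAt hs'
    (fun x hx => (hf x hx).fun_sub (hq x hx))
    fun x hx => by simpa using (hf' x hx).fun_sub (hq' x hx)
  exact ⟨a, b, fun x hx => by linarith [hab x hx]⟩

lemma IsOpen.exists_quadratic_of_hasDerivAt {s : Set ℝ} (hs : IsOpen s)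
    (hs' : IsPreconnected s) {f f' : ℝ → ℝ} {k : ℝ} (hf : ∀ x ∈ s, HasDerivAt f (f' x) x)
    (hf' : ∀ x ∈ s, HasDerivAt f' k x) :
    ∃ a b c : ℝ, ∀ x ∈ s, f x = a * x ^ 2 + b * x + c := by
  obtain ⟨b, c, h⟩ := hs.exists_eq_add_affine_of_hasDerivAt hs' hf hf'
    (q := fun x => k / 2 * x ^ 2) (q' := fun x => k * x)
    (fun x _ => ((hasDerivAt_pow 2 x).const_mul (k / 2)).congr_deriv (by ring))
    fun x _ => by simpa using (hasDerivAt_id x).const_mul k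
  exact ⟨k / 2, b, c, h⟩

lemma IsOpen.exists_sqrt_affine_of_hasDerivAt {s : Set ℝ} (hs : IsOpen s)
    (hs' : IsPreconnected s) {f f' : ℝ → ℝ} {α β c : ℝ} (hpos : ∀ x ∈ s, 0 < α * x + β)
    (hf : ∀ x ∈ s, HasDerivAt f (f' x) x)
    (hf' : ∀ x ∈ s, HasDerivAt f' (-(c * α ^ 2 / 4) / ((α * x + β) * √(α * x + β))) x) :
    ∃ a d : ℝ, ∀ x ∈ s, f x = c * √(α * x + β) + a * x + d := by
  have hL : ∀ x, HasDerivAt (fun t => α * t + β) α x := fun x => by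
    simpa using ((hasDerivAt_id x).const_mul α).add_const β
  refine hs.exists_eq_add_affine_of_hasDerivAt hs' hf hf'
    (q' := fun x => c * (α / (2 * √(α * x + β))))
    (fun x hx => ((hL x).sqrt (hpos x hx).ne').const_mul c) fun x hx => ?_
  have hsqrt := sq_sqrt (hpos x hx).le
  have hroot := sqrt_pos.2 (hpos x hx)
  refine ((((hL x).sqrt (hpos x hx).ne').const_mul 2).inv (by positivity) |>.const_mul α
    |>.const_mul c).congr_deriv ?_
  have hL0 := (hpos x hx).ne'
  field_simp
  linear_combination (4 * c * α ^ 2) * hsqrt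

lemma IsPreconnected.exists_eq_div_mul_sqrt {s : Set ℝ} (hs : IsPreconnected s) {g L : ℝ → ℝ}
    (hg : ContinuousOn g s) (hL : ContinuousOn L s) (hpos : ∀ x ∈ s, 0 < L x)
    (h : ∀ x ∈ s, g x ^ 2 * L x ^ 3 = 1) :
    ∃ σ : ℝ, σ ^ 2 = 1 ∧ ∀ x ∈ s, g x = σ / (L x * √(L x)) := by
  have hne : ∀ {x}, x ∈ s → L x * √(L x) ≠ 0 := fun hx =>
    (mul_pos (hpos _ hx) (sqrt_pos.2 (hpos _ hx))).ne'
  have hroot : ContinuousOn (fun x => 1 / (L x * √(L x))) s :=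
    continuousOn_const.div (hL.mul hL.sqrt) fun _ hx => hne hx
  have hsq : EqOn (g ^ 2) ((fun x => 1 / (L x * √(L x))) ^ 2) s := fun x hx => by
    have hsqrt := sq_sqrt (hpos x hx).le
    have hL0 := (hpos x hx).ne'
    have hS0 := (sqrt_pos.2 (hpos x hx)).ne'
    simp only [Pi.pow_apply]
    field_simp
    linear_combination h x hx + g x ^ 2 * L x ^ 2 * hsqrt
  rcases hs.eq_or_eq_neg_of_sq_eq hg hroot hsq fun hx => by simpa [and_comm] using hne hx with
    h1 | h1
  · exact ⟨1, one_pow 2, h1⟩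
  · exact ⟨-1, by norm_num, fun x hx => by simpa [neg_div] using h1 hx⟩

section ParabolaODE

variable {g g' g'' : ℝ → ℝ} {x : ℝ}

lemma hasDerivAt_rpow_sq_neg_one_third {d : ℝ} (hg : HasDerivAt g d x) (hx : g x ≠ 0) :
    HasDerivAt (fun t => (g t ^ 2) ^ (-(1 / 3) : ℝ))
      (-(2 / 3) * (g x * d) * (g x ^ 2) ^ (-(4 / 3) : ℝ)) x := by
  convert (hg.fun_pow 2).rpow_const (p := -(1 / 3)) (Or.inl (pow_ne_zero 2 hx)) using 1
  rw [show (-(1 / 3) : ℝ) - 1 = -(4 / 3) by norm_num]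
  push_cast
  ring

/-- The function below is the derivative of `(g ^ 2) ^ (-1/3)` found above; the equation is
exactly what makes it locally constant. -/
lemma hasDerivAt_zero_of_ode (hg : HasDerivAt g (g' x) x) (hg' : HasDerivAt g' (g'' x) x)
    (hx : g x ≠ 0) (hode : 5 * g' x ^ 2 = 3 * g'' x * g x) :
    HasDerivAt (fun t => -(2 / 3) * (g t * g' t) * (g t ^ 2) ^ (-(4 / 3) : ℝ)) 0 x := by
  have hsq : 0 < g x ^ 2 := by positivity
  have hP : HasDerivAt (fun t => (g t ^ 2) ^ (-(4 / 3) : ℝ))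
      (-(8 / 3) * (g x * g' x) * ((g x ^ 2) ^ (-(4 / 3) : ℝ) / g x ^ 2)) x := by
    convert (hg.fun_pow 2).rpow_const (p := -(4 / 3)) (Or.inl hsq.ne') using 1
    rw [rpow_sub hsq, rpow_one]
    push_cast
    ring
  refine (((hg.fun_mul hg').const_mul (-(2 / 3) : ℝ)).fun_mul hP).congr_deriv ?_
  field_simp
  linear_combination (2 * (g x ^ 2) ^ (-(4 / 3) : ℝ)) * hode

lemma exists_sq_mul_affine_cube_eq_one {J : Set ℝ} (hJ : IsOpen J) (hJ' : IsPreconnected J)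
    (hg : ∀ x ∈ J, HasDerivAt g (g' x) x) (hg' : ∀ x ∈ J, HasDerivAt g' (g'' x) x)
    (hne : ∀ x ∈ J, g x ≠ 0) (hode : ∀ x ∈ J, 5 * g' x ^ 2 = 3 * g'' x * g x) :
    ∃ a b : ℝ, ∀ x ∈ J, 0 < a * x + b ∧ g x ^ 2 * (a * x + b) ^ 3 = 1 := by
  obtain ⟨a, b, hab⟩ := hJ.exists_eq_affine_of_hasDerivAt hJ'
    (fun x hx => hasDerivAt_rpow_sq_neg_one_third (hg x hx) (hne x hx))
    fun x hx => hasDerivAt_zero_of_ode (hg x hx) (hg' x hx) (hne x hx) (hode x hx)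
  refine ⟨a, b, fun x hx => ?_⟩
  have hsq : 0 < g x ^ 2 := by have := hne x hx; positivity
  rw [← hab x hx, ← rpow_mul_natCast hsq.le]
  refine ⟨rpow_pos_of_pos hsq _, ?_⟩
  norm_num [rpow_neg_one, hsq.ne']

lemma frequently_eq_zero_nhdsGT_of_ode {I : Set ℝ} (hI : IsOpen I)
    (hg : ∀ x ∈ I, HasDerivAt g (g' x) x) (hg' : ∀ x ∈ I, HasDerivAt g' (g'' x) x)
    (hode : ∀ x ∈ I, 5 * g' x ^ 2 = 3 * g'' x * g x) {x₀ : ℝ} (hx₀ : x₀ ∈ I) (hz : g x₀ = 0) :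
    ∃ᶠ x in 𝓝[>] x₀, g x = 0 := by
  intro hne
  obtain ⟨u, hu, hsub⟩ := mem_nhdsGT_iff_exists_Ioo_subset.1
    (hne.and (mem_nhdsWithin_of_mem_nhds (hI.mem_nhds hx₀)))
  obtain ⟨a, b, hab⟩ := exists_sq_mul_affine_cube_eq_one isOpen_Ioo isPreconnected_Ioo
    (fun x hx => hg x (hsub hx).2) (fun x hx => hg' x (hsub hx).2) (fun x hx => (hsub hx).1)
    fun x hx => hode x (hsub hx).2
  have hlim : Tendsto (fun x => g x ^ 2 * (a * x + b) ^ 3) (𝓝[>] x₀) (𝓝 0) := by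
    have hcont : ContinuousAt (fun x => g x ^ 2 * (a * x + b) ^ 3) x₀ := by
      have := (hg x₀ hx₀).continuousAt
      fun_prop
    simpa [hz] using hcont.tendsto.mono_left nhdsWithin_le_nhds
  have hone : (fun x => g x ^ 2 * (a * x + b) ^ 3) =ᶠ[𝓝[>] x₀] fun _ => 1 :=
    eventually_of_mem (Ioo_mem_nhdsGT hu) fun x hx => (hab x hx).2
  exact zero_ne_one (tendsto_nhds_unique (hlim.congr' hone) tendsto_const_nhds)

lemma AnalyticOnNhd.eqOn_zero_or_forall_ne_zero_of_ode {I : Set ℝ} (hI : IsOpen I)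
    (hI' : IsPreconnected I) (hgan : AnalyticOnNhd ℝ g I)
    (hg : ∀ x ∈ I, HasDerivAt g (g' x) x) (hg' : ∀ x ∈ I, HasDerivAt g' (g'' x) x)
    (hode : ∀ x ∈ I, 5 * g' x ^ 2 = 3 * g'' x * g x) :
    EqOn g 0 I ∨ ∀ x ∈ I, g x ≠ 0 := by
  refine or_iff_not_imp_right.2 fun h => ?_
  obtain ⟨x₀, hx₀, hz⟩ : ∃ x ∈ I, g x = 0 := by simpa using h
  exact hgan.eqOn_zero_of_preconnected_of_frequently_eq_zero hI' hx₀
    ((frequently_eq_zero_nhdsGT_of_ode hI hg hg' hode hx₀ hz).filter_mono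
      (nhdsWithin_mono _ fun _ hx => ne_of_gt hx))

end ParabolaODE

theorem stmt_5_general (I : Set ℝ) (hIopen : IsOpen I) (hIconn : I.OrdConnected)
    (f : ℝ → ℝ) (hf : AnalyticOnNhd ℝ f I)
    (hode : ∀ x ∈ I, 5 * (iteratedDeriv 3 f x) ^ 2
      = 3 * iteratedDeriv 4 f x * iteratedDeriv 2 f x) :
    (∃ a b c : ℝ, ∀ x ∈ I, f x = a * x ^ 2 + b * x + c) ∨
    (∃ c α β a d : ℝ, c ≠ 0 ∧ α ≠ 0 ∧ (∀ x ∈ I, 0 < α * x + β) ∧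
       ∀ x ∈ I, f x = c * Real.sqrt (α * x + β) + a * x + d) := by
  have hI : IsPreconnected I := hIconn.isPreconnected
  have hD := fun n x hx => hf.hasDerivAt_iteratedDeriv n (x := x) hx
  have hf' : ∀ x ∈ I, HasDerivAt f (iteratedDeriv 1 f x) x := by simpa using hD 0
  rcases (hf.iteratedDeriv 2).eqOn_zero_or_forall_ne_zero_of_ode hIopen hI (hD 2) (hD 3) hode
    with hg0 | hgne
  · exact .inl <| hIopen.exists_quadratic_of_hasDerivAt hI hf' fun x hx => hg0 hx ▸ hD 1 x hx
  obtain ⟨α, β, hαβ⟩ := exists_sq_mul_affine_cube_eq_one hIopen hI (hD 2) (hD 3) hgne hode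
  obtain ⟨σ, hσ, hgσ⟩ := hI.exists_eq_div_mul_sqrt
    (fun x hx => (hD 2 x hx).continuousAt.continuousWithinAt) (by fun_prop)
    (fun x hx => (hαβ x hx).1) fun x hx => (hαβ x hx).2
  rcases eq_or_ne α 0 with rfl | hα
  · refine .inl (hIopen.exists_quadratic_of_hasDerivAt hI hf' (k := σ / (β * √β))
      fun x hx => (hD 1 x hx).congr_deriv ?_)
    simp [hgσ x hx]
  have hσ0 : σ ≠ 0 := by rintro rfl; norm_num at hσ
  have hf'' : ∀ x ∈ I, HasDerivAt (iteratedDeriv 1 f)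
      (-(-4 * σ / α ^ 2 * α ^ 2 / 4) / ((α * x + β) * √(α * x + β))) x := fun x hx =>
    (hD 1 x hx).congr_deriv (by simp only [Nat.reduceAdd, hgσ x hx]; field_simp)
  obtain ⟨a, d, h⟩ :=
    hIopen.exists_sqrt_affine_of_hasDerivAt hI (fun x hx => (hαβ x hx).1) hf' hf''
  exact .inr ⟨-4 * σ / α ^ 2, α, β, a, d, by simp [hσ0, hα], hα, fun x hx => (hαβ x hx).1,
    h⟩

/-- A real-analytic function on a nonempty open interval satisfying the
universal differential equation of parabolas `5 (f''')² = 3 f⁗ f''` on `I` is either a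
polynomial of degree at most `2` on `I`, or of the form
`f(x) = c √(αx + β) + a x + d` with `c ≠ 0`, `α ≠ 0` and `αx + β > 0` on `I`. -/
theorem stmt_5 (I : Set ℝ) (hIopen : IsOpen I) (hIconn : I.OrdConnected)
    (hIne : I.Nonempty) (f : ℝ → ℝ) (hf : AnalyticOnNhd ℝ f I)
    (hode : ∀ x ∈ I, 5 * (iteratedDeriv 3 f x) ^ 2
      = 3 * iteratedDeriv 4 f x * iteratedDeriv 2 f x) :
    (∃ a b c : ℝ, ∀ x ∈ I, f x = a * x ^ 2 + b * x + c) ∨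
    (∃ c α β a d : ℝ, c ≠ 0 ∧ α ≠ 0 ∧ (∀ x ∈ I, 0 < α * x + β) ∧
       ∀ x ∈ I, f x = c * Real.sqrt (α * x + β) + a * x + d) :=
  stmt_5_general I hIopen hIconn f hf hode
end

section
/- For all real numbers u₁, u₂ with 0 < u₁ < u₂ and either 2 < u₁ or u₂ < 2: ∫_{u₁}^{u₂} ((u − 1)·√((u − u₁)·(u₂ − u)))/(u·(u − 2)) du equals (π/2)·(u₁ + u₂ − √(u₁·u₂) − √((u₁ − 2)·(u₂ − 2)) − 2) in the case 2 < u₁, and equals (π/2)·(u₁ + u₂ − √(u₁·u₂) + √((u₁ − 2)·(u₂ − 2)) − 2) in the case u₂ < 2. -/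
/-!
Partial fractions give `(u - 1) / (u (u - 2)) = (1 / u + 1 / (u - 2)) / 2`, so it suffices to
know `∫_a^b √((u - a)(b - u)) / (u - c) du = π ((a + b) / 2 - c ∓ √((a - c)(b - c)))` for
`c < a` (sign `-`) and `c > b` (sign `+`). For `c = 0 < a` this follows from the explicit primitive
`sqrtMulSubDivPrimitive`, whose two arcsine arguments run from `-1` to `1` and from `1` to `-1`
as `u` runs from `a` to `b`; the general case `c < a` follows by translation and the case
`c > b` by `u ↦ -u`.
-/

open Real Set MeasureTheory intervalIntegral

lemma HasDerivAt.arcsin_of_one_sub_sq_eq {f : ℝ → ℝ} {f' x w : ℝ} (hf : HasDerivAt f f' x)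
    (hw : 0 < w) (h : 1 - f x ^ 2 = w ^ 2) :
    HasDerivAt (fun y => arcsin (f y)) (f' / w) x := by
  have hlt : f x ^ 2 < 1 := by nlinarith
  have hne₁ : f x ≠ -1 := by rintro hx; rw [hx] at hlt; norm_num at hlt
  have hne₂ : f x ≠ 1 := by rintro hx; rw [hx] at hlt; norm_num at hlt
  have := (hasDerivAt_arcsin hne₁ hne₂).comp x hf
  rwa [h, sqrt_sq hw.le, one_div_mul_eq_div] at this

section

variable {a b c u : ℝ}

lemma intervalIntegrable_sqrt_mul_sub_div_sub (hab : a ≤ b) (hc : c ∉ Icc a b) :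
    IntervalIntegrable (fun u => √((u - a) * (b - u)) / (u - c)) volume a b := by
  refine (ContinuousOn.div (by fun_prop) (by fun_prop) ?_).intervalIntegrable
  rintro u hu h
  rw [uIcc_of_le hab, sub_eq_zero.mp h] at hu
  exact hc hu

lemma hasDerivAt_sqrt_mul_sub (hu : u ∈ Ioo a b) :
    HasDerivAt (fun u => √((u - a) * (b - u)))
      ((a + b - 2 * u) / (2 * √((u - a) * (b - u)))) u := by
  have hQ : (u - a) * (b - u) ≠ 0 := (mul_pos (sub_pos.2 hu.1) (sub_pos.2 hu.2)).ne'
  have h : HasDerivAt (fun u => (u - a) * (b - u)) (1 * (b - u) + (u - a) * -1) u :=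
    ((hasDerivAt_id' u).sub_const a).mul ((hasDerivAt_id' u).const_sub b)
  convert h.sqrt hQ using 2
  ring

lemma hasDerivAt_arcsin_two_mul_sub_div (hu : u ∈ Ioo a b) :
    HasDerivAt (fun u => arcsin ((2 * u - a - b) / (b - a))) (1 / √((u - a) * (b - u))) u := by
  have hba : 0 < b - a := sub_pos.2 (hu.1.trans hu.2)
  have hQ : 0 < (u - a) * (b - u) := mul_pos (sub_pos.2 hu.1) (sub_pos.2 hu.2)
  have := HasDerivAt.arcsin_of_one_sub_sq_eq
    (((((hasDerivAt_id' u).const_mul 2).sub_const a).sub_const b).div_const (b - a))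
    (div_pos (mul_pos two_pos (sqrt_pos.2 hQ)) hba) ?_
  · convert this using 1
    field_simp
  · rw [div_pow, div_pow, mul_pow, sq_sqrt hQ.le]
    field_simp
    ring

lemma hasDerivAt_arcsin_sub_mul_div_mul (ha : 0 < a) (hu : u ∈ Ioo a b) :
    HasDerivAt (fun u => arcsin ((2 * a * b - (a + b) * u) / ((b - a) * u)))
      (-√(a * b) / (u * √((u - a) * (b - u)))) u := by
  have hu0 : 0 < u := ha.trans hu.1
  have hba : 0 < b - a := sub_pos.2 (hu.1.trans hu.2)
  have hQ : 0 < (u - a) * (b - u) := mul_pos (sub_pos.2 hu.1) (sub_pos.2 hu.2)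
  have hprod : 0 < a * b := mul_pos ha (ha.trans (hu.1.trans hu.2))
  have h : HasDerivAt (fun u => (2 * a * b - (a + b) * u) / ((b - a) * u))
      ((-((a + b) * 1) * ((b - a) * u) - (2 * a * b - (a + b) * u) * ((b - a) * 1))
        / ((b - a) * u) ^ 2) u :=
    (((hasDerivAt_id' u).const_mul (a + b)).const_sub (2 * a * b)).div
      ((hasDerivAt_id' u).const_mul (b - a)) (by positivity)
  have := HasDerivAt.arcsin_of_one_sub_sq_eq h
    (div_pos (mul_pos (mul_pos two_pos (sqrt_pos.2 hprod)) (sqrt_pos.2 hQ)) (mul_pos hba hu0)) ?_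
  · convert this using 1
    field_simp
    rw [sq_sqrt hprod.le]
    ring
  · rw [div_pow, div_pow, mul_pow, mul_pow, mul_pow, sq_sqrt hQ.le, sq_sqrt hprod.le]
    field_simp
    ring

noncomputable def sqrtMulSubDivPrimitive (a b u : ℝ) : ℝ :=
  √((u - a) * (b - u)) + (a + b) / 2 * arcsin ((2 * u - a - b) / (b - a))
    + √(a * b) * arcsin ((2 * a * b - (a + b) * u) / ((b - a) * u))

lemma hasDerivAt_sqrtMulSubDivPrimitive (ha : 0 < a) (hu : u ∈ Ioo a b) :
    HasDerivAt (sqrtMulSubDivPrimitive a b) (√((u - a) * (b - u)) / u) u := by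
  have hQ : 0 < (u - a) * (b - u) := mul_pos (sub_pos.2 hu.1) (sub_pos.2 hu.2)
  have hprod : 0 < a * b := mul_pos ha (ha.trans (hu.1.trans hu.2))
  refine (((hasDerivAt_sqrt_mul_sub hu).add
    ((hasDerivAt_arcsin_two_mul_sub_div hu).const_mul ((a + b) / 2))).add
    ((hasDerivAt_arcsin_sub_mul_div_mul ha hu).const_mul √(a * b))).congr_deriv ?_
  have hsqrt : 0 < √((u - a) * (b - u)) := sqrt_pos.2 hQ
  have hu0 : u ≠ 0 := (ha.trans hu.1).ne'
  field_simp
  rw [sq_sqrt hQ.le, sq_sqrt hprod.le]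
  ring

lemma continuousOn_sqrtMulSubDivPrimitive (ha : 0 < a) (hab : a < b) :
    ContinuousOn (sqrtMulSubDivPrimitive a b) (Icc a b) := by
  have hne : ∀ u ∈ Icc a b, (b - a) * u ≠ 0 := fun u hu =>
    (mul_pos (sub_pos.2 hab) (ha.trans_le hu.1)).ne'
  unfold sqrtMulSubDivPrimitive
  fun_prop (disch := assumption)

lemma intervalIntegrable_sqrt_mul_sub_div_self (hab : a ≤ b) (h0 : 0 ∉ Icc a b) :
    IntervalIntegrable (fun u => √((u - a) * (b - u)) / u) volume a b := by
  simpa using intervalIntegrable_sqrt_mul_sub_div_sub hab h0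

lemma integral_sqrt_mul_sub_div_self (ha : 0 < a) (hab : a < b) :
    ∫ u in a..b, √((u - a) * (b - u)) / u = π * ((a + b) / 2 - √(a * b)) := by
  rw [integral_eq_sub_of_hasDerivAt_of_le hab.le (continuousOn_sqrtMulSubDivPrimitive ha hab)
    (fun u hu => hasDerivAt_sqrtMulSubDivPrimitive ha hu)
    (intervalIntegrable_sqrt_mul_sub_div_self hab.le fun h => ha.not_ge h.1)]
  have hba : b - a ≠ 0 := (sub_pos.2 hab).ne'
  have hendpoint_a : (2 * a * b - (a + b) * a) / ((b - a) * a) = 1 := by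
    field_simp; ring
  have hendpoint_b : (2 * a * b - (a + b) * b) / ((b - a) * b) = -1 := by
    have : b ≠ 0 := (ha.trans hab).ne'
    field_simp; ring
  simp only [sqrtMulSubDivPrimitive, sub_self, zero_mul, mul_zero, sqrt_zero, hendpoint_a,
    hendpoint_b, show (2 * a - a - b) / (b - a) = -1 by field_simp; ring,
    show (2 * b - a - b) / (b - a) = 1 by field_simp; ring, arcsin_one, arcsin_neg_one]
  ring

lemma integral_sqrt_mul_sub_div_sub_of_lt (hca : c < a) (hab : a < b) :
    ∫ u in a..b, √((u - a) * (b - u)) / (u - c)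
      = π * ((a + b) / 2 - c - √((a - c) * (b - c))) := by
  have := integral_sqrt_mul_sub_div_self (sub_pos.2 hca) (sub_lt_sub_right hab c)
  rw [← integral_comp_sub_right (fun v => √((v - (a - c)) * (b - c - v)) / v) c] at this
  simp only [sub_sub_sub_cancel_right] at this
  rw [this]
  ring

lemma integral_sqrt_mul_sub_div_sub_of_gt (hab : a < b) (hbc : b < c) :
    ∫ u in a..b, √((u - a) * (b - u)) / (u - c)
      = π * ((a + b) / 2 - c + √((a - c) * (b - c))) := by
  have := integral_sqrt_mul_sub_div_sub_of_lt (neg_lt_neg hbc) (neg_lt_neg hab)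
  rw [← integral_comp_neg (fun v => √((v - -b) * (-a - v)) / (v - -c))] at this
  have hneg : ∀ u, √((-u - -b) * (-a - -u)) / (-u - -c) = -(√((u - a) * (b - u)) / (u - c)) :=
    fun u => by rw [show (-u - -b) * (-a - -u) = (u - a) * (b - u) by ring,
      show -u - -c = -(u - c) by ring, div_neg]
  simp only [hneg, intervalIntegral.integral_neg,
    show (-b - -c) * (-a - -c) = (a - c) * (b - c) by ring] at this
  linarith

lemma integral_sub_one_mul_sqrt_mul_sub_div (hab : a ≤ b) (h0 : 0 ∉ Icc a b)
    (h2 : 2 ∉ Icc a b) :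
    ∫ u in a..b, (u - 1) * √((u - a) * (b - u)) / (u * (u - 2))
      = ((∫ u in a..b, √((u - a) * (b - u)) / u)
          + ∫ u in a..b, √((u - a) * (b - u)) / (u - 2)) / 2 := by
  rw [← integral_add (intervalIntegrable_sqrt_mul_sub_div_self hab h0)
    (intervalIntegrable_sqrt_mul_sub_div_sub hab h2), ← intervalIntegral.integral_div]
  refine integral_congr fun u hu => ?_
  rw [uIcc_of_le hab] at hu
  have hu0 : u ≠ 0 := by rintro rfl; exact h0 hu
  have hu2 : u - 2 ≠ 0 := fun h => h2 (sub_eq_zero.mp h ▸ hu)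
  field_simp
  ring

end

/-- **integral 𝓘₂.** For `0 < u₁ < u₂` with either `2 < u₁` or `u₂ < 2`,
`∫_{u₁}^{u₂} (u − 1)√((u − u₁)(u₂ − u))/(u(u − 2)) du` equals
`(π/2)(u₁ + u₂ − √(u₁u₂) − √((u₁ − 2)(u₂ − 2)) − 2)` when `2 < u₁`, and
`(π/2)(u₁ + u₂ − √(u₁u₂) + √((u₁ − 2)(u₂ − 2)) − 2)` when `u₂ < 2`. -/
theorem stmt_8 (u₁ u₂ : ℝ) (h0 : 0 < u₁) (h12 : u₁ < u₂) :
    (2 < u₁ →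
      ∫ u in u₁..u₂, (u - 1) * Real.sqrt ((u - u₁) * (u₂ - u)) / (u * (u - 2))
        = (Real.pi / 2) *
            (u₁ + u₂ - Real.sqrt (u₁ * u₂) - Real.sqrt ((u₁ - 2) * (u₂ - 2)) - 2)) ∧
    (u₂ < 2 →
      ∫ u in u₁..u₂, (u - 1) * Real.sqrt ((u - u₁) * (u₂ - u)) / (u * (u - 2))
        = (Real.pi / 2) *
            (u₁ + u₂ - Real.sqrt (u₁ * u₂) + Real.sqrt ((u₁ - 2) * (u₂ - 2)) - 2)) := by
  have h0' : (0 : ℝ) ∉ Icc u₁ u₂ := fun h => h0.not_ge h.1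
  have hsplit := integral_sub_one_mul_sqrt_mul_sub_div h12.le h0'
  rw [integral_sqrt_mul_sub_div_self h0 h12] at hsplit
  constructor
  · intro h2
    rw [hsplit fun h => h2.not_ge h.1, integral_sqrt_mul_sub_div_sub_of_lt h2 h12]
    ring
  · intro h2
    rw [hsplit fun h => h2.not_ge h.2, integral_sqrt_mul_sub_div_sub_of_gt h12 h2]
    ring
end

section
/- Let μ > 0, b > 0, Λ > 0 and ξ < 0 be real numbers, and set ψ_he(r) = −μ/(b + √(b² + r²)). Suppose 0 < r_p < r_a are such that the radicand W(r) = 2(ξ − ψ_he(r)) − Λ²/r² satisfies W(r_p) = W(r_a) = 0 and W(r) > 0 for all r ∈ (r_p, r_a). Then the Hénon radial action satisfies (1/π)·∫_{r_p}^{r_a} √(W(r)) dr = μ/√(−2ξ) − (1/2)·(Λ + √(Λ² + 4bμ)). -/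
/-!
With `s = b + √(b² + r²)` one has `r² = s (s - 2b)`, so `W r · r²` is the quadratic
`2ξ s² + 2(μ - 2bξ) s - (Λ² + 4bμ) = -2ξ (s - s_p) (s_a - s)`, where `s_p`, `s_a` are the images of
the turning points. As `ds = r dr / (s - b)`, the integral becomes
`√(-2ξ) ∫_{s_p}^{s_a} √((s - s_p)(s_a - s)) (s - b) / (s (s - 2b)) ds`, and the partial fractions
`(s - b) / (s (s - 2b)) = (1/s + 1/(s - 2b)) / 2` reduce it to two Kepler-type integrals
`∫_α^β √((s - α)(β - s)) / (s - c) ds = π ((α + β)/2 - c - √((α - c)(β - c)))`.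
Vieta's formulas turn `s_p + s_a`, `s_p s_a` and `(s_p - 2b)(s_a - 2b)` into `μ, ξ, Λ, b`.
-/

open Real Set intervalIntegral

theorem HasDerivAt.arcsin_of_one_sub_sq_eq_s12 {u : ℝ → ℝ} {u' q x : ℝ} (hu : HasDerivAt u u' x)
    (hq : 0 < q) (h : 1 - u x ^ 2 = q ^ 2) :
    HasDerivAt (fun s => arcsin (u s)) (u' / q) x := by
  have hlt : u x ^ 2 < 1 := by nlinarith
  have hne : u x ≠ -1 ∧ u x ≠ 1 := by
    constructor <;> rintro hux <;> rw [hux] at hlt <;> norm_num at hlt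
  refine ((hasDerivAt_arcsin hne.1 hne.2).comp x hu).congr_deriv ?_
  rw [h, sqrt_sq hq.le, one_div_mul_eq_div]

noncomputable def sqrtMulDivPrimitive (α β s : ℝ) : ℝ :=
  √((s - α) * (β - s)) + (α + β) / 2 * arcsin ((2 * s - α - β) / (β - α))
    - √(α * β) * arcsin (((α + β) * s - 2 * (α * β)) / ((β - α) * s))

section Primitive

variable {α β : ℝ}

theorem hasDerivAt_sqrtMulDivPrimitive (hα : 0 < α) {x : ℝ} (hx : x ∈ Ioo α β) :
    HasDerivAt (sqrtMulDivPrimitive α β) (√((x - α) * (β - x)) / x) x := by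
  obtain ⟨hαx, hxβ⟩ := hx
  have hx0 : 0 < x := hα.trans hαx
  have hβα : 0 < β - α := by linarith
  have hP : 0 < (x - α) * (β - x) := mul_pos (by linarith) (by linarith)
  have hp : 0 < √((x - α) * (β - x)) := sqrt_pos.mpr hP
  have hp2 : √((x - α) * (β - x)) ^ 2 = (x - α) * (β - x) := sq_sqrt hP.le
  have hm : 0 < √(α * β) := sqrt_pos.mpr (by nlinarith)
  have hm2 : √(α * β) ^ 2 = α * β := sq_sqrt (by nlinarith)
  have hid : HasDerivAt (fun s : ℝ => s) 1 x := hasDerivAt_id' x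
  have hP' : HasDerivAt (fun s => (s - α) * (β - s)) (α + β - 2 * x) x :=
    ((hid.sub_const α).mul (hid.const_sub β)).congr_deriv (by ring)
  have h1 : HasDerivAt (fun s => √((s - α) * (β - s)))
      ((α + β - 2 * x) / (2 * √((x - α) * (β - x)))) x := hP'.sqrt hP.ne'
  set p := √((x - α) * (β - x))
  set m := √(α * β)
  have h2 : HasDerivAt (fun s => arcsin ((2 * s - α - β) / (β - α)))
      ((2 / (β - α)) / (2 * p / (β - α))) x := by
    refine HasDerivAt.arcsin_of_one_sub_sq_eq_s12 ?_ (by positivity) ?_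
    · exact ((((hid.const_mul 2).sub_const α).sub_const β).div_const (β - α)).congr_deriv
        (by ring)
    · field_simp; linear_combination (-4) * hp2
  have h3 : HasDerivAt (fun s => arcsin (((α + β) * s - 2 * (α * β)) / ((β - α) * s)))
      ((2 * (α * β) * (β - α)) / ((β - α) * x) ^ 2 / (2 * m * p / ((β - α) * x))) x := by
    refine HasDerivAt.arcsin_of_one_sub_sq_eq_s12 ?_ (by positivity) ?_
    · exact (((hid.const_mul (α + β)).sub_const (2 * (α * β))).div
        (hid.const_mul (β - α)) (by positivity)).congr_deriv (by ring)
    · field_simp; linear_combination (-4) * (α * β) * hp2 - 4 * p ^ 2 * hm2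
  refine ((h1.add (h2.const_mul ((α + β) / 2))).sub (h3.const_mul m)).congr_deriv ?_
  field_simp
  linear_combination (-2) * hp2

theorem continuousOn_sqrtMulDivPrimitive (hα : 0 < α) (hαβ : α < β) :
    ContinuousOn (sqrtMulDivPrimitive α β) (Icc α β) := by
  have hne : ∀ x ∈ Icc α β, (β - α) * x ≠ 0 := fun x hx =>
    mul_ne_zero (by linarith) (hα.trans_le hx.1).ne'
  unfold sqrtMulDivPrimitive
  fun_prop (disch := assumption)

theorem sqrtMulDivPrimitive_right_sub_left (hα : 0 < α) (hαβ : α < β) :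
    sqrtMulDivPrimitive α β β - sqrtMulDivPrimitive α β α = π * ((α + β) / 2 - √(α * β)) := by
  have hβα : β - α ≠ 0 := by linarith
  have hβ : β ≠ 0 := by linarith
  have e1 : (2 * β - α - β) / (β - α) = 1 := by field_simp; ring
  have e2 : ((α + β) * β - 2 * (α * β)) / ((β - α) * β) = 1 := by field_simp; ring
  have e3 : (2 * α - α - β) / (β - α) = -1 := by field_simp; ring
  have e4 : ((α + β) * α - 2 * (α * β)) / ((β - α) * α) = -1 := by field_simp; ring
  simp only [sqrtMulDivPrimitive, e1, e2, e3, e4, sub_self, zero_mul, mul_zero, sqrt_zero,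
    arcsin_one, arcsin_neg_one]
  ring

theorem integral_sqrt_mul_div_self (hα : 0 < α) (hαβ : α < β) :
    ∫ s in α..β, √((s - α) * (β - s)) / s = π * ((α + β) / 2 - √(α * β)) := by
  rw [integral_eq_sub_of_hasDerivAt_of_le hαβ.le (continuousOn_sqrtMulDivPrimitive hα hαβ)
    (fun x hx => hasDerivAt_sqrtMulDivPrimitive hα hx),
    sqrtMulDivPrimitive_right_sub_left hα hαβ]
  refine ContinuousOn.intervalIntegrable ?_
  rw [uIcc_of_le hαβ.le]
  exact ContinuousOn.div (by fun_prop) (by fun_prop) fun x hx => (hα.trans_le hx.1).ne'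

theorem integral_sqrt_mul_div_sub {c : ℝ} (hc : c < α) (hαβ : α < β) :
    ∫ s in α..β, √((s - α) * (β - s)) / (s - c)
      = π * ((α + β) / 2 - c - √((α - c) * (β - c))) := by
  have h := integral_sqrt_mul_div_self (sub_pos.mpr hc) (sub_lt_sub_right hαβ c)
  rw [← integral_comp_sub_right _ c] at h
  simp only [sub_sub_sub_cancel_right] at h
  rw [h]
  ring

end Primitive

theorem quadratic_vieta_of_ne {R : Type*} [CommRing R] [NoZeroDivisors R] {a b c x y : R}
    (hx : a * x ^ 2 + b * x + c = 0) (hy : a * y ^ 2 + b * y + c = 0) (hxy : x ≠ y) :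
    a * (x + y) = -b ∧ a * (x * y) = c := by
  have hsum : a * (x + y) = -b := by
    have h : (x - y) * (a * (x + y) + b) = 0 := by linear_combination hx - hy
    exact eq_neg_of_add_eq_zero_left ((mul_eq_zero.mp h).resolve_left (sub_ne_zero.mpr hxy))
  exact ⟨hsum, by linear_combination x * hsum - hx⟩

noncomputable def isochroneCoord (b r : ℝ) : ℝ := b + √(b ^ 2 + r ^ 2)

section IsochroneCoord

variable {b r : ℝ}

@[fun_prop]
theorem continuous_isochroneCoord (b : ℝ) : Continuous (isochroneCoord b) := by
  unfold isochroneCoord; fun_prop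

theorem isochroneCoord_mul_sub (b r : ℝ) :
    isochroneCoord b r * (isochroneCoord b r - 2 * b) = r ^ 2 := by
  have h := sq_sqrt (add_nonneg (sq_nonneg b) (sq_nonneg r))
  unfold isochroneCoord
  linear_combination h

theorem neg_sqrt_lt_and_lt_sqrt_sq_add_sq (hr : r ≠ 0) :
    -√(b ^ 2 + r ^ 2) < b ∧ b < √(b ^ 2 + r ^ 2) :=
  sq_lt.mp (lt_add_of_pos_right _ (sq_pos_of_ne_zero hr))

theorem isochroneCoord_pos (hr : r ≠ 0) : 0 < isochroneCoord b r := by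
  unfold isochroneCoord; linarith [neg_sqrt_lt_and_lt_sqrt_sq_add_sq (b := b) hr]

theorem two_mul_lt_isochroneCoord (hr : r ≠ 0) : 2 * b < isochroneCoord b r := by
  unfold isochroneCoord; linarith [neg_sqrt_lt_and_lt_sqrt_sq_add_sq (b := b) hr]

theorem isochroneCoord_lt_isochroneCoord {r' : ℝ} (hr : 0 ≤ r) (hrr' : r < r') :
    isochroneCoord b r < isochroneCoord b r' := by
  unfold isochroneCoord
  gcongr

theorem hasDerivAt_isochroneCoord (hr : r ≠ 0) :
    HasDerivAt (isochroneCoord b) (r / (isochroneCoord b r - b)) r := by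
  have h : b ^ 2 + r ^ 2 ≠ 0 := by positivity
  refine (((hasDerivAt_pow 2 r).const_add (b ^ 2)).sqrt h).const_add b |>.congr_deriv ?_
  simp only [isochroneCoord, add_sub_cancel_left]
  field_simp
  norm_num

end IsochroneCoord

theorem isochrone_radicand_mul_sq (μ b Λ ξ : ℝ) {r : ℝ} (hr : r ≠ 0) :
    (2 * (ξ - (-μ / isochroneCoord b r)) - Λ ^ 2 / r ^ 2) * r ^ 2
      = 2 * ξ * isochroneCoord b r ^ 2 + 2 * (μ - 2 * b * ξ) * isochroneCoord b r
        - (Λ ^ 2 + 4 * b * μ) := by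
  have hs := (isochroneCoord_pos (b := b) hr).ne'
  have hrs := isochroneCoord_mul_sub b r
  field_simp
  linear_combination (-(2 * ξ * isochroneCoord b r + 2 * μ)) * hrs

theorem integral_sqrt_div_comp_isochroneCoord (b α β : ℝ) {rp ra : ℝ} (hrp : 0 < rp)
    (hra : 0 < ra) :
    ∫ r in rp..ra, √((isochroneCoord b r - α) * (β - isochroneCoord b r)) / r
      = ∫ s in isochroneCoord b rp..isochroneCoord b ra,
          √((s - α) * (β - s)) * (s - b) / (s * (s - 2 * b)) := by
  have hpos : ∀ r ∈ uIcc rp ra, 0 < r := fun r hr =>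
    (lt_inf_iff.mpr ⟨hrp, hra⟩).trans_le hr.1
  have hcoord : ∀ r ∈ uIcc rp ra, isochroneCoord b r - b ≠ 0 := fun r hr => by
    unfold isochroneCoord; linarith [neg_sqrt_lt_and_lt_sqrt_sq_add_sq (b := b) (hpos r hr).ne']
  rw [← integral_comp_mul_deriv' (fun r hr => hasDerivAt_isochroneCoord (hpos r hr).ne')]
  · refine integral_congr fun r hr => ?_
    have hr0 := (hpos r hr).ne'
    have hs := (isochroneCoord_pos (b := b) hr0).ne'
    have hs2 := (sub_pos.mpr (two_mul_lt_isochroneCoord (b := b) hr0)).ne'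
    have hsb := hcoord r hr
    simp only [Function.comp]
    field_simp
    rw [← isochroneCoord_mul_sub b r, mul_comm b 2]
    field_simp
  · exact ContinuousOn.div continuousOn_id (by fun_prop) hcoord
  · refine ContinuousOn.div (by fun_prop) (by fun_prop) ?_
    rintro - ⟨r, hr, rfl⟩
    rw [isochroneCoord_mul_sub]
    exact pow_ne_zero 2 (hpos r hr).ne'

theorem integral_sqrt_mul_sub_div_mul_sub {b α β : ℝ} (hα : 0 < α) (h2b : 2 * b < α)
    (hαβ : α < β) :
    ∫ s in α..β, √((s - α) * (β - s)) * (s - b) / (s * (s - 2 * b))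
      = π / 2 * (α + β - 2 * b - √(α * β) - √((α - 2 * b) * (β - 2 * b))) := by
  have hint : ∀ c < α, IntervalIntegrable (fun s => √((s - α) * (β - s)) / (s - c))
      MeasureTheory.volume α β :=
    fun c hc => by
      refine ContinuousOn.intervalIntegrable ?_
      rw [uIcc_of_le hαβ.le]
      exact ContinuousOn.div (by fun_prop) (by fun_prop) fun s hs => by linarith [hs.1]
  have hsplit : ∀ s ∈ uIcc α β, √((s - α) * (β - s)) * (s - b) / (s * (s - 2 * b))
      = 1 / 2 * (√((s - α) * (β - s)) / (s - 0) + √((s - α) * (β - s)) / (s - 2 * b)) := by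
    intro s hs
    rw [uIcc_of_le hαβ.le] at hs
    have hs0 : s - 0 ≠ 0 := by linarith [hs.1]
    have hs2b : s - 2 * b ≠ 0 := by linarith [hs.1]
    rw [div_add_div _ _ hs0 hs2b]
    ring
  rw [integral_congr hsplit, integral_const_mul, integral_add (hint 0 hα) (hint _ h2b),
    integral_sqrt_mul_div_sub hα hαβ, integral_sqrt_mul_div_sub h2b hαβ]
  simp only [sub_zero]
  ring

theorem stmt_12_general (μ b Λ ξ : ℝ) (hΛ : 0 < Λ) (hξ : ξ < 0)
    (rp ra : ℝ) (hrp : 0 < rp) (hlt : rp < ra)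
    (W : ℝ → ℝ)
    (hW : ∀ r : ℝ, W r = 2 * (ξ - (-μ / (b + Real.sqrt (b ^ 2 + r ^ 2)))) - Λ ^ 2 / r ^ 2)
    (hWp : W rp = 0) (hWa : W ra = 0) :
    (1 / Real.pi) * ∫ r in rp..ra, Real.sqrt (W r)
      = μ / Real.sqrt (-2 * ξ) - (1 / 2) * (Λ + Real.sqrt (Λ ^ 2 + 4 * b * μ)) := by
  have hra : 0 < ra := hrp.trans hlt
  have hQ (r : ℝ) (hr : r ≠ 0) : W r * r ^ 2 = 2 * ξ * isochroneCoord b r ^ 2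
      + 2 * (μ - 2 * b * ξ) * isochroneCoord b r + -(Λ ^ 2 + 4 * b * μ) := by
    rw [hW, ← sub_eq_add_neg]; exact isochrone_radicand_mul_sq μ b Λ ξ hr
  set sp := isochroneCoord b rp
  set sa := isochroneCoord b ra
  obtain ⟨hsum, hprod⟩ := quadratic_vieta_of_ne (by rw [← hQ rp hrp.ne', hWp, zero_mul])
    (by rw [← hQ ra hra.ne', hWa, zero_mul]) (isochroneCoord_lt_isochroneCoord hrp.le hlt).ne
  have hk : 0 < -2 * ξ := by linarith
  have hsqrtW : ∀ r ∈ uIcc rp ra,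
      √(W r) = √(-2 * ξ) * (√((isochroneCoord b r - sp) * (sa - isochroneCoord b r)) / r) := by
    intro r hr
    have hr0 : 0 < r := (lt_inf_iff.mpr ⟨hrp, hra⟩).trans_le hr.1
    have hWr :
        W r = -2 * ξ * ((isochroneCoord b r - sp) * (sa - isochroneCoord b r)) / r ^ 2 := by
      rw [eq_div_iff (by positivity), hQ r hr0.ne']
      linear_combination isochroneCoord b r * hsum - hprod
    rw [hWr, sqrt_div' _ (sq_nonneg r), sqrt_mul hk.le, sqrt_sq hr0.le, mul_div_assoc]
  have hm : √(sp * sa) = √(Λ ^ 2 + 4 * b * μ) / √(-2 * ξ) := by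
    rw [← sqrt_div' _ hk.le]; congr 1
    rw [eq_div_iff hk.ne']; linear_combination -hprod
  have hn : √((sp - 2 * b) * (sa - 2 * b)) = Λ / √(-2 * ξ) := by
    rw [← sqrt_sq hΛ.le, ← sqrt_div' _ hk.le]; congr 1
    rw [eq_div_iff hk.ne']
    linear_combination -hprod + 2 * b * hsum
  rw [integral_congr hsqrtW, integral_const_mul,
    integral_sqrt_div_comp_isochroneCoord b sp sa hrp hra,
    integral_sqrt_mul_sub_div_mul_sub (isochroneCoord_pos hrp.ne')
      (two_mul_lt_isochroneCoord hrp.ne') (isochroneCoord_lt_isochroneCoord hrp.le hlt), hm, hn]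
  have ht : √(-2 * ξ) ^ 2 = -2 * ξ := sq_sqrt hk.le
  have ht0 : √(-2 * ξ) ≠ 0 := (sqrt_pos.mpr hk).ne'
  set t := √(-2 * ξ)
  field_simp
  linear_combination (sp + sa - 2 * b) * ht - hsum

/-- **Hénon radial action.** For the Hénon isochrone potential
`ψ_he(r) = −μ/(b + √(b² + r²))` with `μ, b > 0`, an orbit of energy `ξ < 0` and angular
momentum `Λ > 0` with periastron `r_p` and apoastron `r_a` (zeros of the radicand
`W(r) = 2(ξ − ψ_he(r)) − Λ²/r²`, positive in between) has radial action
`(1/π) ∫_{r_p}^{r_a} √(W(r)) dr = μ/√(−2ξ) − (1/2)(Λ + √(Λ² + 4bμ))`. -/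
theorem stmt_12 (μ b Λ ξ : ℝ) (hμ : 0 < μ) (hb : 0 < b) (hΛ : 0 < Λ) (hξ : ξ < 0)
    (rp ra : ℝ) (hrp : 0 < rp) (hlt : rp < ra)
    (W : ℝ → ℝ)
    (hW : ∀ r : ℝ, W r = 2 * (ξ - (-μ / (b + Real.sqrt (b ^ 2 + r ^ 2)))) - Λ ^ 2 / r ^ 2)
    (hWp : W rp = 0) (hWa : W ra = 0)
    (hWpos : ∀ r ∈ Set.Ioo rp ra, 0 < W r) :
    (1 / Real.pi) * ∫ r in rp..ra, Real.sqrt (W r)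
      = μ / Real.sqrt (-2 * ξ) - (1 / 2) * (Λ + Real.sqrt (Λ ^ 2 + 4 * b * μ)) :=
  stmt_12_general μ b Λ ξ hΛ hξ rp ra hrp hlt W hW hWp hWa
end

section
/- Let μ > 0, b > 0, Λ > 0 and ξ < 0 be real numbers, and set ψ_he(r) = −μ/(b + √(b² + r²)). Suppose 0 < r_p < r_a are such that the radicand W(r) = 2(ξ − ψ_he(r)) − Λ²/r² satisfies W(r_p) = W(r_a) = 0 and W(r) > 0 for all r ∈ (r_p, r_a). Then the azimuthal increment satisfies (1/π)·∫_{r_p}^{r_a} (Λ/(r²·√(W(r)))) dr = 1/2 + Λ/(2·√(Λ² + 4bμ)); in particular it depends only on Λ and not on ξ, and it is strictly greater than 1/2. -/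
/-!
Put `x = √(b² + r²)`, so that `r² = x² - b²`. Then `r² W(r)` is the quadratic
`2ξ(x² - b²) + 2μ(x - b) - Λ²` in `x`, which vanishes at `x₁ = √(b² + r_p²)` and
`x₂ = √(b² + r_a²)` and hence equals `-2ξ (x - x₁)(x₂ - x)`; evaluating it at `x = ±b` gives
`-2ξ (x₁ - b)(x₂ - b) = Λ²` and `-2ξ (x₁ + b)(x₂ + b) = Λ² + 4bμ`.
With `dx = (r / x) dr` and `2 / r² = (1 / x) (1 / (x - b) + 1 / (x + b))` the integral splits into
two integrals `∫ dx / ((x - d) √(-2ξ (x - x₁)(x₂ - x)))`, `d = ±b`, each equal to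
`π / √(-2ξ (x₁ - d)(x₂ - d))`: an arcsin of a Möbius function of `x` is a primitive.
That primitive is continuous on the closed interval and increasing, which also makes the
improper integrals converge.
-/

open Real Set MeasureTheory intervalIntegral

namespace HenonIsochrone

/-- The Möbius map sending `x₁, x₂` to `-1, 1`; being affine in `1 / (x - d)`, it turns
`dx / ((x - d) √((x - x₁)(x₂ - x)))` into a multiple of `du / √(1 - u²)`. -/
noncomputable def arcsinArg (x₁ x₂ d x : ℝ) : ℝ :=
  (x₁ + x₂ - 2 * d - 2 * (x₁ - d) * (x₂ - d) / (x - d)) / (x₂ - x₁)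

noncomputable def kernel (a x₁ x₂ d x : ℝ) : ℝ :=
  ((x - d) * √(a * ((x - x₁) * (x₂ - x))))⁻¹

noncomputable def primitive (a x₁ x₂ d x : ℝ) : ℝ :=
  arcsin (arcsinArg x₁ x₂ d x) / √(a * ((x₁ - d) * (x₂ - d)))

section Kernel

variable {a x₁ x₂ d x : ℝ}

lemma arcsinArg_left (hd : x₁ ≠ d) (h : x₁ ≠ x₂) : arcsinArg x₁ x₂ d x₁ = -1 := by
  have : x₁ - d ≠ 0 := sub_ne_zero.2 hd
  have : x₂ - x₁ ≠ 0 := sub_ne_zero.2 h.symm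
  unfold arcsinArg
  field_simp
  ring

lemma arcsinArg_right (hd : x₂ ≠ d) (h : x₁ ≠ x₂) : arcsinArg x₁ x₂ d x₂ = 1 := by
  have : x₂ - d ≠ 0 := sub_ne_zero.2 hd
  have : x₂ - x₁ ≠ 0 := sub_ne_zero.2 h.symm
  unfold arcsinArg
  field_simp
  ring

lemma one_sub_arcsinArg_sq (hx : x - d ≠ 0) (h : x₂ - x₁ ≠ 0) :
    1 - arcsinArg x₁ x₂ d x ^ 2
      = 4 * ((x₁ - d) * (x₂ - d)) * ((x - x₁) * (x₂ - x)) / ((x - d) * (x₂ - x₁)) ^ 2 := by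
  unfold arcsinArg
  field_simp
  ring

lemma hasDerivAt_arcsinArg (hx : x - d ≠ 0) :
    HasDerivAt (arcsinArg x₁ x₂ d)
      (2 * ((x₁ - d) * (x₂ - d)) / ((x - d) ^ 2 * (x₂ - x₁))) x := by
  have hf : arcsinArg x₁ x₂ d
      = fun y => (x₁ + x₂ - 2 * d - 2 * (x₁ - d) * (x₂ - d) * (y - d)⁻¹) / (x₂ - x₁) := by
    ext y
    simp only [arcsinArg, div_eq_mul_inv]
  rw [hf]
  refine ((((hasDerivAt_id' x).sub_const d).fun_inv hx).const_mul (2 * (x₁ - d) * (x₂ - d))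
    |>.const_sub (x₁ + x₂ - 2 * d)).div_const (x₂ - x₁) |>.congr_deriv ?_
  field_simp

lemma hasDerivAt_primitive (ha : 0 < a) (hd : d < x₁) (hx : x ∈ Ioo x₁ x₂) :
    HasDerivAt (primitive a x₁ x₂ d) (kernel a x₁ x₂ d x) x := by
  obtain ⟨hx₁, hx₂⟩ := hx
  have hxd : 0 < x - d := by linarith
  have h₁₂ : 0 < x₂ - x₁ := by linarith
  have hαβ : 0 < (x₁ - d) * (x₂ - d) := mul_pos (by linarith) (by linarith)
  have hQ : 0 < (x - x₁) * (x₂ - x) := mul_pos (by linarith) (by linarith)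
  have hu := one_sub_arcsinArg_sq (x₁ := x₁) (x₂ := x₂) hxd.ne' h₁₂.ne'
  have hu_pos : 0 < 1 - arcsinArg x₁ x₂ d x ^ 2 := by rw [hu]; positivity
  have hsqrt : √(1 - arcsinArg x₁ x₂ d x ^ 2)
      = 2 * √((x₁ - d) * (x₂ - d)) * √((x - x₁) * (x₂ - x)) / ((x - d) * (x₂ - x₁)) := by
    rw [hu, sqrt_div' _ (sq_nonneg _), sqrt_sq (by positivity), sqrt_mul (by positivity),
      sqrt_mul (by norm_num), show √(4 : ℝ) = 2 by norm_num]
  have h : HasDerivAt (primitive a x₁ x₂ d) _ x :=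
    ((hasDerivAt_arcsin (by nlinarith) (by nlinarith)).comp x
      (hasDerivAt_arcsinArg (x₁ := x₁) (x₂ := x₂) hxd.ne')).div_const _
  refine h.congr_deriv ?_
  have := sqrt_pos.2 ha
  have := sqrt_pos.2 hαβ
  have := sqrt_pos.2 hQ
  rw [hsqrt, kernel, sqrt_mul ha.le, sqrt_mul ha.le]
  field_simp
  rw [sq_sqrt hαβ.le]

lemma continuousOn_primitive : ContinuousOn (primitive a x₁ x₂ d) (Ioi d) := by
  refine (continuous_arcsin.comp_continuousOn ?_).div_const _
  refine ((continuousOn_const.sub ?_).div_const _)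
  exact continuousOn_const.div (continuousOn_id.sub continuousOn_const)
    fun y hy => (sub_pos.2 (mem_Ioi.1 hy)).ne'

lemma primitive_sub_primitive (hd : d < x₁) (h : x₁ < x₂) :
    primitive a x₁ x₂ d x₂ - primitive a x₁ x₂ d x₁ = π / √(a * ((x₁ - d) * (x₂ - d))) := by
  simp only [primitive, arcsinArg_left hd.ne' h.ne, arcsinArg_right (hd.trans h).ne' h.ne,
    arcsin_one, arcsin_neg_one]
  ring

lemma kernel_nonneg (hx : d ≤ x) : 0 ≤ kernel a x₁ x₂ d x := by
  have := sub_nonneg.2 hx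
  unfold kernel
  positivity

end Kernel

noncomputable def radialKernel (a x₁ x₂ b d r : ℝ) : ℝ :=
  kernel a x₁ x₂ d √(b ^ 2 + r ^ 2) * (r / √(b ^ 2 + r ^ 2))

section Radial

variable {a x₁ x₂ b d r rp ra : ℝ}

lemma abs_lt_sqrt_sq_add_sq (hr : r ≠ 0) : |b| < √(b ^ 2 + r ^ 2) := by
  rw [← sqrt_sq_eq_abs]
  exact sqrt_lt_sqrt (sq_nonneg b) (lt_add_of_pos_right _ (by positivity))

lemma strictMonoOn_sqrt_sq_add_sq : StrictMonoOn (fun r => √(b ^ 2 + r ^ 2)) (Ici 0) :=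
  fun r hr s _ h => sqrt_lt_sqrt (by positivity) (by gcongr)

lemma hasDerivAt_sqrt_sq_add_sq (hr : r ≠ 0) :
    HasDerivAt (fun r => √(b ^ 2 + r ^ 2)) (r / √(b ^ 2 + r ^ 2)) r := by
  refine ((hasDerivAt_pow 2 r).const_add (b ^ 2)).sqrt (by positivity) |>.congr_deriv ?_
  field_simp
  ring

lemma div_sq_mul_sqrt_eq_radialKernel_add (hr : 0 < r) (Λ : ℝ) :
    Λ / (r ^ 2 * √(a * ((√(b ^ 2 + r ^ 2) - x₁) * (x₂ - √(b ^ 2 + r ^ 2))) / r ^ 2))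
      = Λ / 2 * (radialKernel a x₁ x₂ b b r + radialKernel a x₁ x₂ b (-b) r) := by
  have hx : √(b ^ 2 + r ^ 2) ^ 2 = b ^ 2 + r ^ 2 := sq_sqrt (by positivity)
  have hb := abs_lt_sqrt_sq_add_sq (b := b) hr.ne'
  have hxb : √(b ^ 2 + r ^ 2) - b ≠ 0 := sub_ne_zero.2 (by linarith [le_abs_self b])
  have hxb' : √(b ^ 2 + r ^ 2) + b ≠ 0 := by linarith [neg_abs_le b]
  simp only [radialKernel, kernel, sub_neg_eq_add]
  rw [sqrt_div' _ (sq_nonneg r), sqrt_sq hr.le]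
  generalize √(a * ((√(b ^ 2 + r ^ 2) - x₁) * (x₂ - √(b ^ 2 + r ^ 2)))) = q
  rcases eq_or_ne q 0 with rfl | hq
  · simp
  field_simp
  linear_combination 2 * Λ * √(b ^ 2 + r ^ 2) * hx

variable (hx₁ : √(b ^ 2 + rp ^ 2) = x₁) (hx₂ : √(b ^ 2 + ra ^ 2) = x₂)
include hx₁ hx₂

lemma sqrt_sq_add_sq_mem_Icc (hrp : 0 ≤ rp) (hr : r ∈ Icc rp ra) :
    √(b ^ 2 + r ^ 2) ∈ Icc x₁ x₂ := by
  rw [← hx₁, ← hx₂]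
  exact ⟨strictMonoOn_sqrt_sq_add_sq.monotoneOn hrp (hrp.trans hr.1) hr.1,
    strictMonoOn_sqrt_sq_add_sq.monotoneOn (hrp.trans hr.1) (hrp.trans (hr.1.trans hr.2)) hr.2⟩

lemma sqrt_sq_add_sq_mem_Ioo (hrp : 0 ≤ rp) (hr : r ∈ Ioo rp ra) :
    √(b ^ 2 + r ^ 2) ∈ Ioo x₁ x₂ := by
  rw [← hx₁, ← hx₂]
  exact ⟨strictMonoOn_sqrt_sq_add_sq hrp (hrp.trans hr.1.le) hr.1,
    strictMonoOn_sqrt_sq_add_sq (hrp.trans hr.1.le) (hrp.trans (hr.1.trans hr.2).le) hr.2⟩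

lemma hasDerivAt_primitive_comp (ha : 0 < a) (hd : d < x₁) (hrp : 0 ≤ rp) (hr : r ∈ Ioo rp ra) :
    HasDerivAt (fun r => primitive a x₁ x₂ d √(b ^ 2 + r ^ 2)) (radialKernel a x₁ x₂ b d r) r :=
  (hasDerivAt_primitive ha hd (sqrt_sq_add_sq_mem_Ioo hx₁ hx₂ hrp hr)).comp
    (h := fun r => √(b ^ 2 + r ^ 2)) r (hasDerivAt_sqrt_sq_add_sq (hrp.trans_lt hr.1).ne')

lemma continuousOn_primitive_comp (hd : d < x₁) (hrp : 0 ≤ rp) :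
    ContinuousOn (fun r => primitive a x₁ x₂ d √(b ^ 2 + r ^ 2)) (Icc rp ra) :=
  continuousOn_primitive.comp (by fun_prop) fun _ hr =>
    hd.trans_le (sqrt_sq_add_sq_mem_Icc hx₁ hx₂ hrp hr).1

lemma radialKernel_nonneg (hd : d < x₁) (hrp : 0 ≤ rp) (hr : r ∈ Ioo rp ra) :
    0 ≤ radialKernel a x₁ x₂ b d r :=
  mul_nonneg (kernel_nonneg (hd.trans (sqrt_sq_add_sq_mem_Ioo hx₁ hx₂ hrp hr).1).le)
    (div_nonneg (hrp.trans hr.1.le) (sqrt_nonneg _))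

lemma intervalIntegrable_radialKernel (ha : 0 < a) (hd : d < x₁) (hrp : 0 ≤ rp) (hlt : rp < ra) :
    IntervalIntegrable (radialKernel a x₁ x₂ b d) volume rp ra := by
  refine intervalIntegrable_deriv_of_nonneg (g := fun r => primitive a x₁ x₂ d √(b ^ 2 + r ^ 2))
    ?_ ?_ ?_ <;> simp only [uIcc_of_le hlt.le, min_eq_left hlt.le, max_eq_right hlt.le]
  · exact continuousOn_primitive_comp hx₁ hx₂ hd hrp
  · exact fun r hr => hasDerivAt_primitive_comp hx₁ hx₂ ha hd hrp hr
  · exact fun r hr => radialKernel_nonneg hx₁ hx₂ hd hrp hr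

lemma integral_radialKernel (ha : 0 < a) (hd : d < x₁) (hrp : 0 ≤ rp) (hlt : rp < ra) :
    ∫ r in rp..ra, radialKernel a x₁ x₂ b d r = π / √(a * ((x₁ - d) * (x₂ - d))) := by
  rw [integral_eq_sub_of_hasDerivAt_of_le hlt.le (continuousOn_primitive_comp hx₁ hx₂ hd hrp)
    (fun r hr => hasDerivAt_primitive_comp hx₁ hx₂ ha hd hrp hr)
    (intervalIntegrable_radialKernel hx₁ hx₂ ha hd hrp hlt), hx₁, hx₂]
  refine primitive_sub_primitive hd ?_
  rw [← hx₁, ← hx₂]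
  exact strictMonoOn_sqrt_sq_add_sq hrp (hrp.trans hlt.le) hlt

lemma integral_div_sq_mul_sqrt (ha : 0 < a) (hrp : 0 < rp) (hlt : rp < ra) (Λ : ℝ) :
    ∫ r in rp..ra,
        Λ / (r ^ 2 * √(a * ((√(b ^ 2 + r ^ 2) - x₁) * (x₂ - √(b ^ 2 + r ^ 2))) / r ^ 2))
      = Λ / 2 * (π / √(a * ((x₁ - b) * (x₂ - b))) + π / √(a * ((x₁ + b) * (x₂ + b)))) := by
  have hb : |b| < x₁ := hx₁ ▸ abs_lt_sqrt_sq_add_sq hrp.ne'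
  have hd : b < x₁ := (le_abs_self b).trans_lt hb
  have hd' : -b < x₁ := (neg_le_abs b).trans_lt hb
  rw [integral_congr fun r hr => div_sq_mul_sqrt_eq_radialKernel_add
      (hrp.trans_le (uIcc_of_le hlt.le ▸ hr).1) Λ,
    intervalIntegral.integral_const_mul, intervalIntegral.integral_add
      (intervalIntegrable_radialKernel hx₁ hx₂ ha hd hrp.le hlt)
      (intervalIntegrable_radialKernel hx₁ hx₂ ha hd' hrp.le hlt),
    integral_radialKernel hx₁ hx₂ ha hd hrp.le hlt, integral_radialKernel hx₁ hx₂ ha hd' hrp.le hlt,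
    sub_neg_eq_add, sub_neg_eq_add]

end Radial

lemma quadratic_eq_mul_sub_mul_sub {A B C x₁ x₂ : ℝ} (h : x₁ ≠ x₂)
    (h₁ : A * x₁ ^ 2 + B * x₁ + C = 0) (h₂ : A * x₂ ^ 2 + B * x₂ + C = 0) (x : ℝ) :
    A * x ^ 2 + B * x + C = A * (x - x₁) * (x - x₂) := by
  have hB : A * (x₁ + x₂) + B = 0 :=
    (mul_eq_zero.1 (by linear_combination h₁ - h₂ : (x₁ - x₂) * (A * (x₁ + x₂) + B) = 0))
      |>.resolve_left (sub_ne_zero.2 h)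
  linear_combination h₁ + (x - x₁) * hB

noncomputable def radicand (μ b Λ ξ r : ℝ) : ℝ :=
  2 * (ξ - (-μ / (b + √(b ^ 2 + r ^ 2)))) - Λ ^ 2 / r ^ 2

section Henon

variable {μ b Λ ξ r rp ra : ℝ}

lemma sq_mul_radicand (hr : r ≠ 0) :
    r ^ 2 * radicand μ b Λ ξ r
      = 2 * ξ * (√(b ^ 2 + r ^ 2) ^ 2 - b ^ 2) + 2 * μ * (√(b ^ 2 + r ^ 2) - b) - Λ ^ 2 := by
  have hx : √(b ^ 2 + r ^ 2) ^ 2 = b ^ 2 + r ^ 2 := sq_sqrt (by positivity)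
  have hbx : b + √(b ^ 2 + r ^ 2) ≠ 0 := by
    linarith [abs_lt_sqrt_sq_add_sq (b := b) hr, neg_abs_le b]
  unfold radicand
  field_simp
  linear_combination (-(2 * ξ * (b + √(b ^ 2 + r ^ 2))) - 2 * μ) * hx

variable (hrp : 0 < rp) (hlt : rp < ra)
  (hWp : radicand μ b Λ ξ rp = 0) (hWa : radicand μ b Λ ξ ra = 0)
include hrp hlt hWp hWa

lemma radicand_numerator_eq (x : ℝ) :
    2 * ξ * (x ^ 2 - b ^ 2) + 2 * μ * (x - b) - Λ ^ 2
      = -2 * ξ * ((x - √(b ^ 2 + rp ^ 2)) * (√(b ^ 2 + ra ^ 2) - x)) := by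
  have h₁ := sq_mul_radicand (μ := μ) (b := b) (Λ := Λ) (ξ := ξ) hrp.ne'
  have h₂ := sq_mul_radicand (μ := μ) (b := b) (Λ := Λ) (ξ := ξ) (hrp.trans hlt).ne'
  rw [hWp, mul_zero] at h₁
  rw [hWa, mul_zero] at h₂
  have hne : √(b ^ 2 + rp ^ 2) ≠ √(b ^ 2 + ra ^ 2) :=
    (strictMonoOn_sqrt_sq_add_sq hrp.le (hrp.trans hlt).le hlt).ne
  linear_combination quadratic_eq_mul_sub_mul_sub (A := 2 * ξ) (B := 2 * μ)
    (C := -(2 * ξ * b ^ 2) - 2 * μ * b - Λ ^ 2) hne (by linear_combination -h₁)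
    (by linear_combination -h₂) x

lemma radicand_eq_of_roots (hr : r ≠ 0) :
    radicand μ b Λ ξ r = -2 * ξ * ((√(b ^ 2 + r ^ 2) - √(b ^ 2 + rp ^ 2))
      * (√(b ^ 2 + ra ^ 2) - √(b ^ 2 + r ^ 2))) / r ^ 2 := by
  rw [← radicand_numerator_eq hrp hlt hWp hWa, ← sq_mul_radicand hr]
  field_simp

lemma sq_add_four_mul_pos_of_roots (hξ : ξ < 0) : 0 < Λ ^ 2 + 4 * b * μ := by
  have hb := abs_lt_sqrt_sq_add_sq (b := b) hrp.ne'
  have h₁₂ : √(b ^ 2 + rp ^ 2) < √(b ^ 2 + ra ^ 2) :=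
    strictMonoOn_sqrt_sq_add_sq hrp.le (hrp.trans hlt).le hlt
  have := neg_abs_le b
  rw [show Λ ^ 2 + 4 * b * μ = -2 * ξ * ((√(b ^ 2 + rp ^ 2) + b) * (√(b ^ 2 + ra ^ 2) + b)) by
    linear_combination -radicand_numerator_eq hrp hlt hWp hWa (-b)]
  exact mul_pos (by linarith) (mul_pos (by linarith) (by linarith))

lemma integral_div_sq_mul_sqrt_radicand (hΛ : 0 < Λ) (hξ : ξ < 0) :
    ∫ r in rp..ra, Λ / (r ^ 2 * √(radicand μ b Λ ξ r))
      = Λ / 2 * (π / Λ + π / √(Λ ^ 2 + 4 * b * μ)) := by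
  have hfac := radicand_numerator_eq hrp hlt hWp hWa
  rw [integral_congr fun r hr => by
      rw [radicand_eq_of_roots hrp hlt hWp hWa (hrp.trans_le (uIcc_of_le hlt.le ▸ hr).1).ne'],
    integral_div_sq_mul_sqrt rfl rfl (by linarith) hrp hlt,
    show -2 * ξ * ((√(b ^ 2 + rp ^ 2) - b) * (√(b ^ 2 + ra ^ 2) - b)) = Λ ^ 2 by
      linear_combination hfac b,
    show -2 * ξ * ((√(b ^ 2 + rp ^ 2) + b) * (√(b ^ 2 + ra ^ 2) + b)) = Λ ^ 2 + 4 * b * μ by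
      linear_combination hfac (-b),
    sqrt_sq hΛ.le]

end Henon

end HenonIsochrone

open HenonIsochrone in
theorem stmt_14_general (μ b Λ ξ : ℝ) (hΛ : 0 < Λ) (hξ : ξ < 0)
    (rp ra : ℝ) (hrp : 0 < rp) (hlt : rp < ra)
    (W : ℝ → ℝ)
    (hW : ∀ r : ℝ, W r = 2 * (ξ - (-μ / (b + Real.sqrt (b ^ 2 + r ^ 2)))) - Λ ^ 2 / r ^ 2)
    (hWp : W rp = 0) (hWa : W ra = 0) :
    (1 / Real.pi) * ∫ r in rp..ra, Λ / (r ^ 2 * Real.sqrt (W r))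
      = 1 / 2 + Λ / (2 * Real.sqrt (Λ ^ 2 + 4 * b * μ)) ∧
    1 / 2 < (1 / Real.pi) * ∫ r in rp..ra, Λ / (r ^ 2 * Real.sqrt (W r)) := by
  obtain rfl : W = radicand μ b Λ ξ := funext hW
  have hS := sqrt_pos.2 (sq_add_four_mul_pos_of_roots hrp hlt hWp hWa hξ)
  have hvalue : 1 / π * ∫ r in rp..ra, Λ / (r ^ 2 * √(radicand μ b Λ ξ r))
      = 1 / 2 + Λ / (2 * √(Λ ^ 2 + 4 * b * μ)) := by
    rw [integral_div_sq_mul_sqrt_radicand hrp hlt hWp hWa hΛ hξ]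
    field_simp
  exact ⟨hvalue, hvalue ▸ lt_add_of_pos_right _ (by positivity)⟩

/-- **azimuthal increment in the Hénon potential.** For the Hénon isochrone
potential `ψ_he(r) = −μ/(b + √(b² + r²))` with `μ, b > 0`, an orbit of energy `ξ < 0` and
angular momentum `Λ > 0` with periastron `r_p` and apoastron `r_a` (zeros of the radicand
`W(r) = 2(ξ − ψ_he(r)) − Λ²/r²`, positive in between) has azimuthal increment
`n_φ = (1/π) ∫_{r_p}^{r_a} Λ/(r²√(W(r))) dr = 1/2 + Λ/(2√(Λ² + 4bμ))`; in particular it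
depends only on `Λ` (not on `ξ`) and is strictly greater than `1/2`. -/
theorem stmt_14 (μ b Λ ξ : ℝ) (hμ : 0 < μ) (hb : 0 < b) (hΛ : 0 < Λ) (hξ : ξ < 0)
    (rp ra : ℝ) (hrp : 0 < rp) (hlt : rp < ra)
    (W : ℝ → ℝ)
    (hW : ∀ r : ℝ, W r = 2 * (ξ - (-μ / (b + Real.sqrt (b ^ 2 + r ^ 2)))) - Λ ^ 2 / r ^ 2)
    (hWp : W rp = 0) (hWa : W ra = 0)
    (hWpos : ∀ r ∈ Set.Ioo rp ra, 0 < W r) :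
    (1 / Real.pi) * ∫ r in rp..ra, Λ / (r ^ 2 * Real.sqrt (W r))
      = 1 / 2 + Λ / (2 * Real.sqrt (Λ ^ 2 + 4 * b * μ)) ∧
    1 / 2 < (1 / Real.pi) * ∫ r in rp..ra, Λ / (r ^ 2 * Real.sqrt (W r)) :=
  stmt_14_general μ b Λ ξ hΛ hξ rp ra hrp hlt W hW hWp hWa
end

section
/- Let μ > 0, b > 0, Λ > 0 and ξ < 0 be real numbers, and set ψ_he(r) = −μ/(b + √(b² + r²)). Suppose 0 < r_p < r_a are such that the radicand W(r) = 2(ξ − ψ_he(r)) − Λ²/r² satisfies W(r_p) = W(r_a) = 0 and W(r) > 0 for all r ∈ (r_p, r_a). Define the radial period τ_r = 2·∫_{r_p}^{r_a} dr/√(W(r)) and the isochrone semi-major axis a = (√(b² + r_p²) + √(b² + r_a²))/2. Then the generalized Kepler third law holds: μ·τ_r² = 4π²·a³. -/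
/-!
In the variable `u = √(b² + r²)` the Hénon radicand becomes polynomial: `r² W(r)` is the
quadratic `2ξu² + 2μu − (Λ² + 2μb + 2ξb²)`. Its roots are `p = u(r_p)` and `q = u(r_a)`, so
`μ = −ξ(p + q)` and `r² W = −2ξ (u − p)(q − u)`. Since `r dr = u du`, the radial period is
`2/√(−2ξ) · ∫_p^q u du / √((u − p)(q − u)) = π (p + q)/√(−2ξ)`, and with `a = (p + q)/2`
this is Kepler's third law `μ τ_r² = 4π² a³`.
-/

open Real Set intervalIntegral

theorem integral_eq_sub_of_hasDerivAt_of_nonneg {f f' : ℝ → ℝ} {a b : ℝ} (hab : a ≤ b)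
    (hcont : ContinuousOn f (Icc a b)) (hderiv : ∀ x ∈ Ioo a b, HasDerivAt f (f' x) x)
    (hpos : ∀ x ∈ Ioo a b, 0 ≤ f' x) : ∫ x in a..b, f' x = f b - f a :=
  integral_eq_sub_of_hasDerivAt_of_le hab hcont hderiv <|
    (intervalIntegrable_iff_integrableOn_Ioc_of_le hab).2
      (integrableOn_deriv_of_nonneg hcont hderiv hpos)

lemma quadratic_eq_mul_sub_mul_sub {α β γ p q : ℝ} (hpq : p ≠ q)
    (hp : α * p ^ 2 + β * p + γ = 0) (hq : α * q ^ 2 + β * q + γ = 0) :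
    β = -α * (p + q) ∧ ∀ u, α * u ^ 2 + β * u + γ = α * (u - p) * (u - q) := by
  have hβ : β = -α * (p + q) := by
    refine mul_left_cancel₀ (sub_ne_zero.2 hpq.symm) ?_
    linear_combination hq - hp
  exact ⟨hβ, fun u => by linear_combination hp + (u - p) * hβ⟩

section IsoRadius

noncomputable def isoRadius (b r : ℝ) : ℝ := √(b ^ 2 + r ^ 2)

variable (b : ℝ) {r s : ℝ}

lemma isoRadius_sq : isoRadius b r ^ 2 = b ^ 2 + r ^ 2 := sq_sqrt (by positivity)

lemma abs_lt_isoRadius (hr : r ≠ 0) : |b| < isoRadius b r := by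
  rw [isoRadius, ← sqrt_sq_eq_abs]
  exact sqrt_lt_sqrt (sq_nonneg b) (by simpa using pow_pos (abs_pos.2 hr) 2)

lemma isoRadius_pos (hr : r ≠ 0) : 0 < isoRadius b r :=
  (abs_nonneg b).trans_lt (abs_lt_isoRadius b hr)

lemma isoRadius_lt_isoRadius (hr : 0 ≤ r) (hrs : r < s) : isoRadius b r < isoRadius b s :=
  sqrt_lt_sqrt (by positivity) (by nlinarith)

lemma continuous_isoRadius : Continuous (isoRadius b) := by
  unfold isoRadius
  fun_prop

lemma hasDerivAt_isoRadius (hr : r ≠ 0) : HasDerivAt (isoRadius b) (r / isoRadius b r) r := by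
  have h := ((hasDerivAt_pow 2 r).const_add (b ^ 2)).sqrt (by positivity)
  refine h.congr_deriv ?_
  have hpos := isoRadius_pos b hr
  simp only [isoRadius] at hpos ⊢
  field_simp
  norm_num

lemma sq_mul_henonRadicand (μ Λ ξ : ℝ) (hr : r ≠ 0) :
    r ^ 2 * (2 * (ξ - (-μ / (b + √(b ^ 2 + r ^ 2)))) - Λ ^ 2 / r ^ 2)
      = 2 * ξ * isoRadius b r ^ 2 + 2 * μ * isoRadius b r
        + (-Λ ^ 2 - 2 * μ * b - 2 * ξ * b ^ 2) := by
  change r ^ 2 * (2 * (ξ - (-μ / (b + isoRadius b r))) - Λ ^ 2 / r ^ 2) = _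
  have hb : 0 < b + isoRadius b r := by
    linarith [neg_abs_le b, abs_lt_isoRadius b hr]
  field_simp
  linear_combination (-2 * (ξ * (b + isoRadius b r) + μ)) * isoRadius_sq b (r := r)

end IsoRadius

section KeplerPrimitive

/-- The substitution `u = (p + q)/2 + (q - p)/2 · sin θ` turns `u du / √((u - p)(q - u))` into
`((p + q)/2 + (q - p)/2 · sin θ) dθ`; this is the resulting primitive. -/
noncomputable def keplerPrimitive (p q u : ℝ) : ℝ :=
  (p + q) / 2 * arcsin ((2 * u - (p + q)) / (q - p)) - √((u - p) * (q - u))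

variable {p q u : ℝ}

lemma continuous_keplerPrimitive (p q : ℝ) : Continuous (keplerPrimitive p q) := by
  unfold keplerPrimitive
  have harcsin := continuous_arcsin
  fun_prop

lemma keplerPrimitive_sub_keplerPrimitive (hpq : p < q) :
    keplerPrimitive p q q - keplerPrimitive p q p = π * (p + q) / 2 := by
  have hqp : q - p ≠ 0 := sub_ne_zero.2 hpq.ne'
  have hq : (2 * q - (p + q)) / (q - p) = 1 := by field_simp; ring
  have hp : (2 * p - (p + q)) / (q - p) = -1 := by field_simp; ring
  simp only [keplerPrimitive, hq, hp, arcsin_one, arcsin_neg_one, sub_self, mul_zero, zero_mul,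
    sqrt_zero]
  ring

lemma hasDerivAt_keplerPrimitive (hpu : p < u) (huq : u < q) :
    HasDerivAt (keplerPrimitive p q) (u / √((u - p) * (q - u))) u := by
  have hqp : 0 < q - p := by linarith
  have hP : 0 < (u - p) * (q - u) := mul_pos (sub_pos.2 hpu) (sub_pos.2 huq)
  set T := (2 * u - (p + q)) / (q - p)
  have hsqrt : √(1 - T ^ 2) = 2 * √((u - p) * (q - u)) / (q - p) := by
    have h : 1 - T ^ 2 = (2 * √((u - p) * (q - u)) / (q - p)) ^ 2 := by
      simp only [T]
      rw [div_pow, div_pow, mul_pow, sq_sqrt hP.le]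
      field_simp
      ring
    rw [h, sqrt_sq (by positivity)]
  have hT1 : T ≠ -1 := by
    rw [Ne, div_eq_iff hqp.ne']
    linarith
  have hT2 : T ≠ 1 := by
    rw [Ne, div_eq_iff hqp.ne']
    linarith
  have hT : HasDerivAt (fun u => (2 * u - (p + q)) / (q - p)) (2 / (q - p)) u := by
    simpa using (((hasDerivAt_id u).const_mul 2).sub_const (p + q)).div_const (q - p)
  have hprod : HasDerivAt (fun u => (u - p) * (q - u)) (p + q - 2 * u) u := by
    refine (((hasDerivAt_id' u).sub_const p).fun_mul
      ((hasDerivAt_id' u).const_sub q)).congr_deriv ?_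
    ring
  have h := (((hasDerivAt_arcsin hT1 hT2).comp u hT).const_mul ((p + q) / 2)).sub
    (hprod.sqrt hP.ne')
  refine h.congr_deriv ?_
  rw [hsqrt]
  have hsqrtP := sqrt_pos.2 hP
  field_simp
  ring

end KeplerPrimitive

theorem integral_inv_sqrt_eq_of_sq_mul_eq {b ε rp ra : ℝ} {W : ℝ → ℝ} (hε : 0 < ε) (hrp : 0 ≤ rp)
    (hlt : rp < ra)
    (hW : ∀ r ∈ Ioo rp ra, r ^ 2 * W r
      = ε * ((isoRadius b r - isoRadius b rp) * (isoRadius b ra - isoRadius b r))) :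
    ∫ r in rp..ra, 1 / √(W r) = π * (isoRadius b rp + isoRadius b ra) / (2 * √ε) := by
  set p := isoRadius b rp
  set q := isoRadius b ra
  have hderiv : ∀ r ∈ Ioo rp ra,
      HasDerivAt (fun r => keplerPrimitive p q (isoRadius b r) / √ε) (1 / √(W r)) r := by
    intro r hr
    have hr0 : 0 < r := hrp.trans_lt hr.1
    have hpu : p < isoRadius b r := isoRadius_lt_isoRadius b hrp hr.1
    have huq : isoRadius b r < q := isoRadius_lt_isoRadius b hr0.le hr.2
    have hP : 0 < (isoRadius b r - p) * (q - isoRadius b r) :=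
      mul_pos (sub_pos.2 hpu) (sub_pos.2 huq)
    have hsqrtW : √(W r) = √ε * √((isoRadius b r - p) * (q - isoRadius b r)) / r := by
      have h : W r = (√ε * √((isoRadius b r - p) * (q - isoRadius b r)) / r) ^ 2 := by
        rw [div_pow, mul_pow, sq_sqrt hε.le, sq_sqrt hP.le, ← hW r hr]
        field_simp
      rw [h, sqrt_sq (by positivity)]
    have hF := ((hasDerivAt_keplerPrimitive hpu huq).comp r
      (hasDerivAt_isoRadius b hr0.ne')).div_const √ε
    refine hF.congr_deriv ?_
    rw [hsqrtW]
    have hu := isoRadius_pos b hr0.ne'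
    have hsqrtP := sqrt_pos.2 hP
    field_simp
  have hcont : Continuous (fun r => keplerPrimitive p q (isoRadius b r) / √ε) :=
    ((continuous_keplerPrimitive p q).comp (continuous_isoRadius b)).div_const _
  rw [integral_eq_sub_of_hasDerivAt_of_nonneg hlt.le hcont.continuousOn hderiv
    (fun _ _ => by positivity), ← sub_div,
    keplerPrimitive_sub_keplerPrimitive (isoRadius_lt_isoRadius b hrp hlt)]
  ring

theorem stmt_16_general (μ b Λ ξ : ℝ) (hξ : ξ < 0)
    (rp ra : ℝ) (hrp : 0 < rp) (hlt : rp < ra)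
    (W : ℝ → ℝ)
    (hW : ∀ r : ℝ, W r = 2 * (ξ - (-μ / (b + Real.sqrt (b ^ 2 + r ^ 2)))) - Λ ^ 2 / r ^ 2)
    (hWp : W rp = 0) (hWa : W ra = 0)
    (τr a : ℝ)
    (hτ : τr = 2 * ∫ r in rp..ra, 1 / Real.sqrt (W r))
    (ha : a = (Real.sqrt (b ^ 2 + rp ^ 2) + Real.sqrt (b ^ 2 + ra ^ 2)) / 2) :
    μ * τr ^ 2 = 4 * Real.pi ^ 2 * a ^ 3 := by
  have hquad : ∀ r ≠ 0, r ^ 2 * W r = 2 * ξ * isoRadius b r ^ 2 + 2 * μ * isoRadius b r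
      + (-Λ ^ 2 - 2 * μ * b - 2 * ξ * b ^ 2) := fun r hr => by
    rw [hW]
    exact sq_mul_henonRadicand b μ Λ ξ hr
  obtain ⟨hμ, hfactor⟩ := quadratic_eq_mul_sub_mul_sub (isoRadius_lt_isoRadius b hrp.le hlt).ne
    (by rw [← hquad rp hrp.ne', hWp, mul_zero])
    (by rw [← hquad ra (hrp.trans hlt).ne', hWa, mul_zero])
  have hε : 0 < -2 * ξ := by linarith
  have hperiod := integral_inv_sqrt_eq_of_sq_mul_eq (b := b) (W := W) hε hrp.le hlt fun r hr => by
    rw [hquad r (hrp.trans hr.1).ne', hfactor]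
    ring
  change a = (isoRadius b rp + isoRadius b ra) / 2 at ha
  rw [hτ, hperiod, ha, show μ = -ξ * (isoRadius b rp + isoRadius b ra) by linarith]
  simp only [mul_pow, div_pow, sq_sqrt hε.le]
  field_simp [hξ.ne]
  ring

/-- **generalized Kepler third law for the Hénon potential.** For the Hénon
isochrone potential `ψ_he(r) = −μ/(b + √(b² + r²))` with `μ, b > 0`, a radially periodic
orbit of energy `ξ < 0` and angular momentum `Λ > 0` with periastron `r_p` and apoastron
`r_a` (zeros of the radicand `W(r) = 2(ξ − ψ_he(r)) − Λ²/r²`, positive in between),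
radial period `τ_r = 2∫_{r_p}^{r_a} dr/√(W(r))` and isochrone semi-major axis
`a = (√(b² + r_p²) + √(b² + r_a²))/2` satisfies `μ τ_r² = 4π² a³`. -/
theorem stmt_16 (μ b Λ ξ : ℝ) (hμ : 0 < μ) (hb : 0 < b) (hΛ : 0 < Λ) (hξ : ξ < 0)
    (rp ra : ℝ) (hrp : 0 < rp) (hlt : rp < ra)
    (W : ℝ → ℝ)
    (hW : ∀ r : ℝ, W r = 2 * (ξ - (-μ / (b + Real.sqrt (b ^ 2 + r ^ 2)))) - Λ ^ 2 / r ^ 2)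
    (hWp : W rp = 0) (hWa : W ra = 0)
    (hWpos : ∀ r ∈ Set.Ioo rp ra, 0 < W r)
    (τr a : ℝ)
    (hτ : τr = 2 * ∫ r in rp..ra, 1 / Real.sqrt (W r))
    (ha : a = (Real.sqrt (b ^ 2 + rp ^ 2) + Real.sqrt (b ^ 2 + ra ^ 2)) / 2) :
    μ * τr ^ 2 = 4 * Real.pi ^ 2 * a ^ 3 :=
  stmt_16_general μ b Λ ξ hξ rp ra hrp hlt W hW hWp hWa τr a hτ ha
end
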